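/- arXiv:2504.01678 — 5 statements merged into one kernel-verified Lean document; each statement's English description precedes it below -/
import Mathlib

section
/- Let k: ℝ → ℝ≥0 be a bounded non-negative function with ∫ k = 1, symmetric (k(y) = k(−y)), and with finite second moment. Fix h > 0 and define Υ_k(c) = c·∫_{-∞}^{c/h} k(y) dy − h·∫_{-∞}^{c/h} y·k(y) dy. Then Υ_k is a convex function on ℝ. -/
open MeasureTheory

/-- For a bounded, symmetric, integrable kernel k with unit mass and finite
second moment, and bandwidth h > 0, the smoothed positive part
Υ_k(c) = c·∫_{-∞}^{c/h} k − h·∫_{-∞}^{c/h} y·k(y) dy is convex on ℝ. -/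
theorem Upsilon_convex (k : ℝ → ℝ) (h : ℝ) (hh : 0 < h)
    (hk0 : ∀ y, 0 ≤ k y) (hkb : ∃ M : ℝ, ∀ y, k y ≤ M)
    (hki : Integrable k) (hk1 : ∫ y : ℝ, k y = 1)
    (hsym : ∀ y, k y = k (-y))
    (hmom : Integrable (fun y : ℝ => y ^ 2 * k y)) :
    ConvexOn ℝ Set.univ (fun c : ℝ =>
      c * (∫ y in Set.Iic (c / h), k y) - h * ∫ y in Set.Iic (c / h), y * k y) := by
  have hyk : Integrable (fun y : ℝ => y * k y) := by
    refine (hki.add hmom).mono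
      (measurable_id.aestronglyMeasurable.mul hki.aestronglyMeasurable) ?_
    filter_upwards with y
    have hk := hk0 y
    have h1 : |y| ≤ 1 + y ^ 2 := by nlinarith [sq_nonneg (|y| - 1), sq_abs y]
    simp only [norm_mul, Real.norm_eq_abs, Pi.add_apply]
    rw [abs_of_nonneg hk,
      abs_of_nonneg (by positivity : (0:ℝ) ≤ k y + y ^ 2 * k y)]
    nlinarith
  set g : ℝ → ℝ → ℝ := fun c y => max (c - h * y) 0 * k y with hg
  have hind : ∀ c, g c = Set.indicator (Set.Iic (c / h))
      (fun y => c * k y - h * (y * k y)) := by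
    intro c
    funext y
    by_cases hy : y ∈ Set.Iic (c / h)
    · rw [Set.indicator_of_mem hy]
      have hy' : y * h ≤ c := (le_div_iff₀ hh).mp hy
      have : 0 ≤ c - h * y := by nlinarith
      simp only [hg, max_eq_left this]
      ring
    · rw [Set.indicator_of_notMem hy]
      have hy' : c / h < y := lt_of_not_ge hy
      have hy'' : c < y * h := (div_lt_iff₀ hh).mp hy'
      have : c - h * y ≤ 0 := by nlinarith
      simp [hg, max_eq_right this]
  have hgi : ∀ c, Integrable (g c) := by
    intro c
    rw [hind c]
    exact ((hki.const_mul c).sub (hyk.const_mul h)).indicator measurableSet_Iic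
  have hval : ∀ c, c * (∫ y in Set.Iic (c / h), k y) -
      h * ∫ y in Set.Iic (c / h), y * k y = ∫ y, g c y := by
    intro c
    rw [hind c, integral_indicator measurableSet_Iic,
      integral_sub ((hki.const_mul c).integrableOn) ((hyk.const_mul h).integrableOn),
      integral_const_mul, integral_const_mul]
  refine ⟨convex_univ, fun x _ y' _ a b ha hb hab => ?_⟩
  simp only [smul_eq_mul]
  rw [hval, hval, hval]
  have heq : ∫ y, (a * g x y + b * g y' y)
      = a * (∫ y, g x y) + b * ∫ y, g y' y := by
    rw [integral_add ((hgi x).const_mul a) ((hgi y').const_mul b),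
      integral_const_mul, integral_const_mul]
  have hle : ∫ y, g (a * x + b * y') y ≤ ∫ y, (a * g x y + b * g y' y) := by
    refine integral_mono (by simpa using hgi (a * x + b * y'))
      (((hgi x).const_mul a).add ((hgi y').const_mul b)) ?_
    intro z
    simp only [hg]
    have hk := hk0 z
    have hp1 : x - h * z ≤ max (x - h * z) 0 := le_max_left _ _
    have hp0 : (0:ℝ) ≤ max (x - h * z) 0 := le_max_right _ _
    have hq1 : y' - h * z ≤ max (y' - h * z) 0 := le_max_left _ _
    have hq0 : (0:ℝ) ≤ max (y' - h * z) 0 := le_max_right _ _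
    have he : a * x + b * y' - h * z = a * (x - h * z) + b * (y' - h * z) := by
      linear_combination h * z * hab
    have hmax : max (a * x + b * y' - h * z) 0
        ≤ a * max (x - h * z) 0 + b * max (y' - h * z) 0 := by
      apply max_le
      · rw [he]
        exact add_le_add (mul_le_mul_of_nonneg_left hp1 ha)
          (mul_le_mul_of_nonneg_left hq1 hb)
      · positivity
    nlinarith [mul_le_mul_of_nonneg_right hmax hk]
  exact le_trans hle (le_of_eq heq)
end

section
/- Let h > 0 and define f(c) = 0 for c < −h, f(c) = (c+h)²/(4h) for −h ≤ c < h, and f(c) = c for c ≥ h. Then for every c ∈ ℝ, f(c) equals the minimum of c_a + c_q²/(4h) over all (c_a, c_q) ∈ ℝ² satisfying c_a + c_q ≥ c + h, 0 ≤ c_q ≤ 2h, and c_a ≥ 0. -/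
/-- The piecewise function Υ_k for the uniform kernel equals the minimum of a
convex quadratic program over auxiliary variables (c_a, c_q). -/
theorem Upsilon_uniform_opt (h : ℝ) (hh : 0 < h) (c : ℝ) :
    IsLeast
      {v : ℝ | ∃ ca cq : ℝ, ca + cq ≥ c + h ∧ 0 ≤ cq ∧ cq ≤ 2 * h ∧ 0 ≤ ca ∧
        v = ca + cq ^ 2 / (4 * h)}
      (if c < -h then 0 else if c < h then (c + h) ^ 2 / (4 * h) else c) := by
  constructor
  · split_ifs with h1 h2
    · exact ⟨0, 0, by linarith, le_refl 0, by linarith, le_refl 0, by norm_num⟩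
    · exact ⟨0, c + h, by linarith, by linarith, by linarith, le_refl 0, by ring⟩
    · exact ⟨c - h, 2 * h, by linarith, by linarith, le_refl _, by linarith, by
        field_simp; ring⟩
  · rintro v ⟨ca, cq, hge, hcq0, hcq2, hca0, rfl⟩
    have h4 : (0:ℝ) < 4 * h := by linarith
    split_ifs with h1 h2
    · positivity
    · have hge' : (0:ℝ) ≤ ca + cq - (c + h) := by linarith
      have key : (c + h) ^ 2 ≤ 4 * h * ca + cq ^ 2 := by
        nlinarith [sq_nonneg (c + h - cq),
          mul_nonneg hge' (by linarith : (0:ℝ) ≤ c + h + cq),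
          mul_nonneg hca0 (by linarith : (0:ℝ) ≤ 4*h - (c+h+cq))]
      calc (c + h) ^ 2 / (4 * h) ≤ (4 * h * ca + cq ^ 2) / (4 * h) := by
            gcongr
        _ = ca + cq ^ 2 / (4 * h) := by field_simp
    · rw [← sub_nonneg]
      have : ca + cq ^ 2 / (4 * h) - c = (ca - (c + h - cq)) + (cq - 2*h)^2 / (4*h) := by
        field_simp; ring
      rw [this]
      have : (0:ℝ) ≤ ca - (c + h - cq) := by linarith
      positivity
end

section
/- Let h > 0 and define g(c) = 0 for c < −h, g(c) = (c+h)³/(6h²) for −h ≤ c < 0, g(c) = (h−c)³/(6h²) + c for 0 ≤ c < h, and g(c) = c for c ≥ h. Then for every c ∈ ℝ, g(c) equals the minimum of c_a + c₁³/(6h²) + c₂³/(6h²) − c₂ + 5h/6 over all (c_a, c₁, c₂) ∈ ℝ³ satisfying c_a + c₁ − c₂ ≥ c, 0 ≤ c₁ ≤ h, 0 ≤ c₂ ≤ h, and c_a ≥ 0. -/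
/-- The piecewise function Υ_k for the triangular kernel equals the minimum of a
convex program with cubic objective over auxiliary variables (c_a, c₁, c₂). -/
theorem Upsilon_triangular_opt (h : ℝ) (hh : 0 < h) (c : ℝ) :
    IsLeast
      {v : ℝ | ∃ ca c1 c2 : ℝ, ca + c1 - c2 ≥ c ∧ 0 ≤ c1 ∧ c1 ≤ h ∧
        0 ≤ c2 ∧ c2 ≤ h ∧ 0 ≤ ca ∧
        v = ca + c1 ^ 3 / (6 * h ^ 2) + c2 ^ 3 / (6 * h ^ 2) - c2 + 5 * h / 6}
      (if c < -h then 0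
       else if c < 0 then (c + h) ^ 3 / (6 * h ^ 2)
       else if c < h then (h - c) ^ 3 / (6 * h ^ 2) + c
       else c) := by
  have hne : h ≠ 0 := ne_of_gt hh
  split_ifs with hc1 hc2 hc3
  · constructor
    · exact ⟨0, 0, h, by linarith, le_refl _, hh.le, hh.le, le_refl _, le_refl _,
        by field_simp; ring⟩
    · rintro v ⟨ca, c1, c2, hcon, hA, hB, hC, hD, hE, rfl⟩
      rw [← sub_nonneg]
      have key : (0:ℝ) ≤ 6*h^2*ca + c1^3 + c2^3 - 6*h^2*c2 + 5*h^3 := by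
        nlinarith [mul_nonneg (sub_nonneg.2 hD) (show (0:ℝ) ≤ 5*h^2 - h*c2 - c2^2 by nlinarith),
          pow_nonneg hA 3, mul_nonneg hE (sq_nonneg h)]
      have heq : ca + c1 ^ 3 / (6 * h ^ 2) + c2 ^ 3 / (6 * h ^ 2) - c2 + 5 * h / 6 - 0
          = (6*h^2*ca + c1^3 + c2^3 - 6*h^2*c2 + 5*h^3) / (6*h^2) := by
        field_simp; ring
      rw [heq]; exact div_nonneg key (by positivity)
  · push_neg at hc1
    constructor
    · exact ⟨0, c + h, h, by linarith, by linarith, by linarith, hh.le, le_refl _, le_refl _,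
        by field_simp; ring⟩
    · rintro v ⟨ca, c1, c2, hcon, hA, hB, hC, hD, hE, rfl⟩
      rw [← sub_nonneg]
      have key : (0:ℝ) ≤ 6*h^2*ca + c1^3 + c2^3 - 6*h^2*c2 + 5*h^3 - (c+h)^3 := by
        nlinarith [mul_nonneg (show (0:ℝ) ≤ 3*(c+h)^2 by positivity) (sub_nonneg.2 hcon),
          mul_nonneg hE (show (0:ℝ) ≤ 6*h^2 - 3*(c+h)^2 by nlinarith),
          mul_nonneg (sq_nonneg (c1 - (c+h))) (show (0:ℝ) ≤ c1 + 2*(c+h) by linarith),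
          mul_nonneg (sub_nonneg.2 hD)
            (show (0:ℝ) ≤ (6*h^2 - 3*(c+h)^2) - (h^2 + h*c2 + c2^2) by nlinarith)]
      have heq : ca + c1 ^ 3 / (6 * h ^ 2) + c2 ^ 3 / (6 * h ^ 2) - c2 + 5 * h / 6
          - (c + h) ^ 3 / (6 * h ^ 2)
          = (6*h^2*ca + c1^3 + c2^3 - 6*h^2*c2 + 5*h^3 - (c+h)^3) / (6*h^2) := by
        field_simp
      rw [heq]; exact div_nonneg key (by positivity)
  · push_neg at hc2
    constructor
    · exact ⟨0, h, h - c, by linarith, hh.le, le_refl _, by linarith, by linarith, le_refl _,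
        by field_simp; ring⟩
    · rintro v ⟨ca, c1, c2, hcon, hA, hB, hC, hD, hE, rfl⟩
      rw [← sub_nonneg]
      have key : (0:ℝ) ≤ 6*h^2*ca + c1^3 + c2^3 - 6*h^2*c2 + 5*h^3 - (h-c)^3 - 6*h^2*c := by
        nlinarith [mul_nonneg (show (0:ℝ) ≤ 6*h^2 - 3*(h-c)^2 by nlinarith) (sub_nonneg.2 hcon),
          mul_nonneg hE (show (0:ℝ) ≤ 3*(h-c)^2 by positivity),
          mul_nonneg (sq_nonneg (c2 - (h-c))) (show (0:ℝ) ≤ c2 + 2*(h-c) by linarith),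
          mul_nonneg (sub_nonneg.2 hB)
            (show (0:ℝ) ≤ (6*h^2 - 3*(h-c)^2) - (h^2 + h*c1 + c1^2) by nlinarith)]
      have heq : ca + c1 ^ 3 / (6 * h ^ 2) + c2 ^ 3 / (6 * h ^ 2) - c2 + 5 * h / 6
          - ((h - c) ^ 3 / (6 * h ^ 2) + c)
          = (6*h^2*ca + c1^3 + c2^3 - 6*h^2*c2 + 5*h^3 - (h-c)^3 - 6*h^2*c) / (6*h^2) := by
        field_simp; ring
      rw [heq]; exact div_nonneg key (by positivity)
  · push_neg at hc3
    constructor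
    · exact ⟨c - h, h, 0, by linarith, hh.le, le_refl _, le_refl _, hh.le, by linarith,
        by field_simp; ring⟩
    · rintro v ⟨ca, c1, c2, hcon, hA, hB, hC, hD, hE, rfl⟩
      rw [← sub_nonneg]
      have key : (0:ℝ) ≤ 6*h^2*ca + c1^3 + c2^3 - 6*h^2*c2 + 5*h^3 - 6*h^2*c := by
        nlinarith [mul_nonneg (show (0:ℝ) ≤ 6*h^2 by positivity) (sub_nonneg.2 hcon),
          mul_nonneg (sub_nonneg.2 hB) (show (0:ℝ) ≤ 5*h^2 - h*c1 - c1^2 by nlinarith),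
          pow_nonneg hC 3]
      have heq : ca + c1 ^ 3 / (6 * h ^ 2) + c2 ^ 3 / (6 * h ^ 2) - c2 + 5 * h / 6 - c
          = (6*h^2*ca + c1^3 + c2^3 - 6*h^2*c2 + 5*h^3 - 6*h^2*c) / (6*h^2) := by
        field_simp
      rw [heq]; exact div_nonneg key (by positivity)
end

section
/- For real numbers s, c₁ ≥ 0, the inequality s ≥ c₁³ holds if and only if there exists r ∈ ℝ satisfying s + c₁ ≥ ‖(s − c₁, 2r)‖ and r + 1/4 ≥ ‖(r − 1/4, c₁)‖. -/
/-- For s ∈ ℝ and c₁ ≥ 0: s ≥ c₁³ iff there exists r with the two second-order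
cone constraints s + c₁ ≥ ‖(s − c₁, 2r)‖ and r + 1/4 ≥ ‖(r − 1/4, c₁)‖. -/
theorem cubic_soc (s c1 : ℝ) (hc1 : 0 ≤ c1) :
    (c1 ^ 3 ≤ s) ↔
    ∃ r : ℝ, Real.sqrt ((s - c1) ^ 2 + (2 * r) ^ 2) ≤ s + c1 ∧
      Real.sqrt ((r - 1 / 4) ^ 2 + c1 ^ 2) ≤ r + 1 / 4 := by
  constructor
  · intro hs
    have hs0 : 0 ≤ s := le_trans (by positivity) hs
    refine ⟨c1 ^ 2, ?_, ?_⟩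
    · have h1 : (s - c1) ^ 2 + (2 * c1 ^ 2) ^ 2 ≤ (s + c1) ^ 2 := by nlinarith
      calc Real.sqrt ((s - c1) ^ 2 + (2 * c1 ^ 2) ^ 2) ≤ Real.sqrt ((s + c1) ^ 2) :=
            Real.sqrt_le_sqrt h1
        _ = s + c1 := Real.sqrt_sq (by linarith)
    · have h1 : (c1 ^ 2 - 1 / 4) ^ 2 + c1 ^ 2 ≤ (c1 ^ 2 + 1 / 4) ^ 2 := by nlinarith
      calc Real.sqrt ((c1 ^ 2 - 1 / 4) ^ 2 + c1 ^ 2) ≤ Real.sqrt ((c1 ^ 2 + 1 / 4) ^ 2) :=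
            Real.sqrt_le_sqrt h1
        _ = c1 ^ 2 + 1 / 4 := Real.sqrt_sq (by positivity)
  · rintro ⟨r, h1, h2⟩
    have n1 : (0:ℝ) ≤ (s - c1) ^ 2 + (2 * r) ^ 2 := by positivity
    have n2 : (0:ℝ) ≤ (r - 1 / 4) ^ 2 + c1 ^ 2 := by positivity
    have s1 := Real.sq_sqrt n1
    have s2 := Real.sq_sqrt n2
    have p1 := Real.sqrt_nonneg ((s - c1) ^ 2 + (2 * r) ^ 2)
    have p2 := Real.sqrt_nonneg ((r - 1 / 4) ^ 2 + c1 ^ 2)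
    have q1 : (s - c1) ^ 2 + (2 * r) ^ 2 ≤ (s + c1) ^ 2 := by nlinarith
    have q2 : (r - 1 / 4) ^ 2 + c1 ^ 2 ≤ (r + 1 / 4) ^ 2 := by nlinarith
    -- r² ≤ s*c1 and c1² ≤ r
    have hr : c1 ^ 2 ≤ r := by nlinarith
    have hsc : r ^ 2 ≤ s * c1 := by nlinarith
    have hs0 : 0 ≤ s + c1 := le_trans p1 h1
    rcases eq_or_lt_of_le hc1 with h | h
    · have : (0:ℝ) ≤ s := by nlinarith
      nlinarith
    · nlinarith [sq_nonneg (r - c1 ^ 2), mul_pos h h]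
end

section
/- Let f₁, ..., fₙ ∈ ℝ be fixed, w⁰ ∈ ℝⁿ with w⁰ ≥ 0 and Σ wᵢ⁰ = 1, φ convex with φ(1)=0 and φ(t)=+∞ for t<0, and τ > 0. Then the optimal value of max{ Σᵢ wᵢ fᵢ : w ∈ ℝⁿ, w ≥ 0, Σᵢ wᵢ = 1, Σᵢ wᵢ⁰ φ(wᵢ/wᵢ⁰) ≤ τ } equals the optimal value of min over λ ≥ 0, η ∈ ℝ of τλ + η + λ Σᵢ wᵢ⁰ φ*((fᵢ − η)/λ), where φ* is the convex conjugate of φ. -/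
open Finset
lemma coe_sum' {α : Type*} (s : Finset α) (g : α → ℝ) :
    ((∑ i ∈ s, g i : ℝ) : EReal) = ∑ i ∈ s, ((g i : ℝ) : EReal) := by
  induction s using Finset.cons_induction with
  | empty => simp
  | cons a s ha ih => simp [Finset.sum_cons, ← ih]

lemma sum_bot' {α : Type*} [DecidableEq α] (s : Finset α) (g : α → EReal) (i : α) (hi : i ∈ s) (h : g i = ⊥) :
    ∑ j ∈ s, g j = ⊥ := by
  rw [← Finset.add_sum_erase s g hi, h, EReal.bot_add]

lemma le_coe_of_forall_eps {x : EReal} {r : ℝ} (H : ∀ ε : ℝ, 0 < ε → x ≤ ((r + ε : ℝ) : EReal)) :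
    x ≤ (r : EReal) := by
  induction x using EReal.rec with
  | bot => exact bot_le
  | coe q =>
      have h2 : ∀ ε : ℝ, 0 < ε → q ≤ r + ε := fun ε hε => EReal.coe_le_coe_iff.1 (H ε hε)
      exact EReal.coe_le_coe_iff.2 (le_of_forall_pos_le_add h2)
  | top => exact absurd (H 1 one_pos) (EReal.coe_lt_top (r+1)).not_ge

lemma coe_le_of_forall_eps {x : EReal} {r : ℝ} (H : ∀ ε : ℝ, 0 < ε → ((r - ε : ℝ) : EReal) ≤ x) :
    (r : EReal) ≤ x := by
  induction x using EReal.rec with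
  | bot =>
      exact absurd (H 1 one_pos) (EReal.bot_lt_coe (r-1)).not_ge
  | coe q =>
      have h2 : ∀ ε : ℝ, 0 < ε → r - ε ≤ q := fun ε hε => EReal.coe_le_coe_iff.1 (H ε hε)
      have : ∀ ε : ℝ, 0 < ε → r ≤ q + ε := fun ε hε => by linarith [h2 ε hε]
      exact EReal.coe_le_coe_iff.2 (le_of_forall_pos_le_add this)
  | top => exact le_top


lemma supergrad (V : ℝ → ℝ) (dom : Set ℝ)
    (hcomb : ∀ x ∈ dom, ∀ z ∈ dom, ∀ θ : ℝ, 0 ≤ θ → θ ≤ 1 →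
      (θ*x + (1-θ)*z ∈ dom ∧ θ * V x + (1-θ) * V z ≤ V (θ*x + (1-θ)*z)))
    (x₀ l r : ℝ) (hx₀ : x₀ ∈ dom) (hl : l ∈ dom) (hr : r ∈ dom)
    (hlx : l < x₀) (hxr : x₀ < r) :
    ∃ g : ℝ, ∀ s ∈ dom, V s ≤ V x₀ + g * (s - x₀) := by
  -- three point inequality for concave V
  have tp : ∀ x ∈ dom, ∀ z ∈ dom, ∀ y : ℝ, x < y → y < z →
      (z - y) * V x + (y - x) * V z ≤ (z - x) * V y := by
    intro x hx z hz y hxy hyz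
    have hxz : x < z := hxy.trans hyz
    set θ : ℝ := (z - y)/(z - x) with hθ
    have hzx : (0:ℝ) < z - x := by linarith
    have hθ0 : 0 ≤ θ := div_nonneg (by linarith) hzx.le
    have hθ1 : θ ≤ 1 := by rw [hθ, div_le_one hzx]; linarith
    obtain ⟨-, h2⟩ := hcomb x hx z hz θ hθ0 hθ1
    have hy : θ*x + (1-θ)*z = y := by rw [hθ]; field_simp; ring
    rw [hy] at h2
    have hth : θ * (z-x) = z - y := by rw [hθ]; field_simp
    have h1θ : (1-θ) * (z-x) = y - x := by nlinarith [hth]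
    have h3 := mul_le_mul_of_nonneg_right h2 hzx.le
    have e1 : (θ * V x + (1-θ) * V z) * (z-x) = (z-y) * V x + (y-x) * V z := by
      linear_combination V x * hth + V z * h1θ
    rw [e1] at h3
    linarith
  set SL : Set ℝ := (fun s => (V x₀ - V s)/(x₀ - s)) '' (dom ∩ Set.Iio x₀) with hSL
  have hne : SL.Nonempty := ⟨_, ⟨l, ⟨hl, hlx⟩, rfl⟩⟩
  have hbdd : BddBelow SL := by
    refine ⟨(V r - V x₀)/(r - x₀), ?_⟩
    rintro _ ⟨s, ⟨hs, hsx⟩, rfl⟩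
    have h1 : (0:ℝ) < x₀ - s := by simp at hsx; linarith
    have h2 : (0:ℝ) < r - x₀ := by linarith
    have := tp s hs r hr x₀ (by simpa using hsx) hxr
    rw [div_le_div_iff₀ h2 h1]
    nlinarith
  refine ⟨sInf SL, fun s hs => ?_⟩
  rcases lt_trichotomy s x₀ with h | h | h
  · have hmem : (V x₀ - V s)/(x₀ - s) ∈ SL := ⟨s, ⟨hs, h⟩, rfl⟩
    have hle := csInf_le hbdd hmem
    have h1 : (0:ℝ) < x₀ - s := by linarith
    have h3 : ((V x₀ - V s)/(x₀ - s)) * (x₀ - s) = V x₀ - V s := by field_simp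
    nlinarith [mul_le_mul_of_nonneg_right hle h1.le, h3]
  · simp [h]
  · have key : (V s - V x₀)/(s - x₀) ≤ sInf SL := by
      apply le_csInf hne
      rintro _ ⟨u, ⟨hu, hux⟩, rfl⟩
      have h1 : (0:ℝ) < x₀ - u := by simp at hux; linarith
      have h2 : (0:ℝ) < s - x₀ := by linarith
      have := tp u hu s hs x₀ (by simpa using hux) h
      rw [div_le_div_iff₀ h2 h1]
      nlinarith
    have h2 : (0:ℝ) < s - x₀ := by linarith
    have h3 : ((V s - V x₀)/(s - x₀)) * (s - x₀) = V s - V x₀ := by field_simp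
    nlinarith [mul_le_mul_of_nonneg_right key h2.le]

lemma sumsup {n : ℕ} {ι : Type*} (t0 : ι) (c : Fin n → ℝ) (hc : ∀ i, 0 < c i)
    (g : Fin n → ι → EReal) (a : Fin n → ℝ) (hga : ∀ i, g i t0 = ((a i : ℝ) : EReal))
    (B : ℝ) (H : ∀ tv : Fin n → ι, ∑ i, ((c i : ℝ) : EReal) * g i (tv i) ≤ (B : EReal)) :
    ∑ i, ((c i : ℝ) : EReal) * (⨆ t, g i t) ≤ (B : EReal) := by
  classical
  set U : Fin n → EReal := fun i => ⨆ t, g i t with hU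
  have hUlb : ∀ i, ((a i : ℝ) : EReal) ≤ U i := fun i => hga i ▸ le_iSup (g i) t0
  have hUtop : ∀ j, U j ≠ ⊤ := by
    intro j hTop
    set R : ℝ := ∑ i ∈ univ.erase j, c i * a i with hR
    set K : ℝ := (B - R)/(c j) + 1 with hK
    have hKU : ((K : ℝ) : EReal) < U j := by rw [hTop]; exact EReal.coe_lt_top K
    obtain ⟨tj, htj⟩ := lt_iSup_iff.1 hKU
    set tv : Fin n → ι := Function.update (fun _ => t0) j tj with htv
    have Hs := H tv
    have e1 : ∑ i, ((c i : ℝ) : EReal) * g i (tv i)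
        = ((c j : ℝ) : EReal) * g j tj + ∑ i ∈ univ.erase j, ((c i : ℝ) : EReal) * g i (tv i) := by
      rw [← Finset.add_sum_erase univ (fun i => ((c i : ℝ) : EReal) * g i (tv i)) (mem_univ j)]
      simp [htv]
    have e2 : ∑ i ∈ univ.erase j, ((c i : ℝ) : EReal) * g i (tv i) = ((R : ℝ) : EReal) := by
      rw [hR, coe_sum']
      refine Finset.sum_congr rfl ?_
      intro i hi
      have hij : i ≠ j := Finset.ne_of_mem_erase hi
      rw [htv]
      simp only [Function.update_of_ne hij]
      rw [hga i, ← EReal.coe_mul]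
    rw [e1, e2] at Hs
    have e3 : ((c j * K : ℝ) : EReal) ≤ ((c j : ℝ) : EReal) * g j tj := by
      rw [EReal.coe_mul]
      exact mul_le_mul_of_nonneg_left htj.le (EReal.coe_nonneg.2 (hc j).le)
    have e4 : ((c j * K + R : ℝ) : EReal) ≤ (B : EReal) := by
      rw [EReal.coe_add]
      exact le_trans (add_le_add_left e3 _) Hs
    have e5 : c j * K + R ≤ B := EReal.coe_le_coe_iff.1 e4
    have hcj := hc j
    rw [hK] at e5
    have : c j * ((B - R)/(c j)) = B - R := by field_simp
    nlinarith
  have hUbot : ∀ i, U i ≠ ⊥ := fun i =>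
    (lt_of_lt_of_le (EReal.bot_lt_coe (a i)) (hUlb i)).ne'
  set Ur : Fin n → ℝ := fun i => (U i).toReal with hUr
  have hUco : ∀ i, U i = ((Ur i : ℝ) : EReal) := fun i =>
    (EReal.coe_toReal (hUtop i) (hUbot i)).symm
  have key : ∑ i, c i * Ur i ≤ B := by
    apply le_of_forall_pos_le_add
    intro ε hε
    set ε' : ℝ := ε / (∑ i, c i + 1) with hε'
    have hsc : (0:ℝ) ≤ ∑ i, c i := Finset.sum_nonneg fun i _ => (hc i).le
    have hε'pos : 0 < ε' := div_pos hε (by linarith)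
    have hch : ∀ i : Fin n, ∃ t : ι, ((Ur i - ε' : ℝ) : EReal) < g i t := by
      intro i
      have h1 : ((Ur i - ε' : ℝ) : EReal) < U i := by
        rw [hUco i]
        exact EReal.coe_lt_coe_iff.2 (by linarith)
      exact lt_iSup_iff.1 h1
    set tv : Fin n → ι := fun i => (hch i).choose with htv
    have htv2 : ∀ i, ((Ur i - ε' : ℝ) : EReal) < g i (tv i) := fun i => (hch i).choose_spec
    have hreal : ∀ i, g i (tv i) = (((g i (tv i)).toReal : ℝ) : EReal) := by
      intro i
      refine (EReal.coe_toReal ?_ ?_).symm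
      · intro hT
        exact hUtop i (top_le_iff.1 (hT ▸ le_iSup (g i) (tv i)))
      · intro hB
        have h2 := htv2 i
        rw [hB] at h2
        exact absurd h2 (EReal.bot_lt_coe _).not_gt
    have Hs := H tv
    have e6 : ∑ i, ((c i : ℝ) : EReal) * g i (tv i)
        = ((∑ i, c i * (g i (tv i)).toReal : ℝ) : EReal) := by
      rw [coe_sum']
      refine Finset.sum_congr rfl fun i _ => ?_
      rw [EReal.coe_mul]
      congr 1
      exact hreal i
    rw [e6] at Hs
    have e7 : ∑ i, c i * (g i (tv i)).toReal ≤ B := EReal.coe_le_coe_iff.1 Hs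
    have e8 : ∀ i : Fin n, Ur i - ε' ≤ (g i (tv i)).toReal := by
      intro i
      have := (htv2 i).le
      rw [hreal i] at this
      exact EReal.coe_le_coe_iff.1 this
    have e9 : ∑ i, c i * (Ur i - ε') ≤ ∑ i, c i * (g i (tv i)).toReal :=
      Finset.sum_le_sum fun i _ => mul_le_mul_of_nonneg_left (e8 i) (hc i).le
    have e10 : ∑ i, c i * (Ur i - ε') = ∑ i, c i * Ur i - ε' * ∑ i, c i := by
      rw [Finset.mul_sum, ← Finset.sum_sub_distrib]
      exact Finset.sum_congr rfl fun i _ => by ring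
    have e11 : ε' * ∑ i, c i ≤ ε := by
      rw [hε']
      rw [div_mul_eq_mul_div, div_le_iff₀ (by linarith)]
      nlinarith
    nlinarith [e9, e10, e11, e7]
  calc ∑ i, ((c i : ℝ) : EReal) * U i = ((∑ i, c i * Ur i : ℝ) : EReal) := by
        rw [coe_sum']
        exact Finset.sum_congr rfl fun i _ => by rw [hUco i, ← EReal.coe_mul]
    _ ≤ (B : EReal) := EReal.coe_le_coe_iff.2 key


section
variable (φ : ℝ → EReal) (hφ1 : φ 1 = 0)
variable (hφconv : ∀ a ∈ Set.Ici (0 : ℝ), ∀ b ∈ Set.Ici (0 : ℝ), ∀ t : ℝ,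
      0 ≤ t → t ≤ 1 →
      φ (t * a + (1 - t) * b) ≤ (t : EReal) * φ a + ((1 - t : ℝ) : EReal) * φ b)

include hφ1 hφconv in
lemma phi_ne_bot : ∀ t : ℝ, 0 ≤ t → φ t ≠ ⊥ := by
  intro t ht hbot
  rcases lt_trichotomy t 1 with h | h | h
  · have h2 := hφconv t ht (2 - t) (by simp; linarith) (1/2) (by norm_num) (by norm_num)
    have e : (1/2 : ℝ) * t + (1 - 1/2) * (2 - t) = 1 := by ring
    rw [e, hφ1, hbot] at h2
    have : ((1/2 : ℝ) : EReal) * (⊥ : EReal) = ⊥ :=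
      EReal.coe_mul_bot_of_pos (by norm_num)
    rw [this, EReal.bot_add] at h2
    exact absurd (le_bot_iff.1 h2) (by simp)
  · rw [h, hφ1] at hbot; exact absurd hbot (by simp)
  · have ht1 : (0:ℝ) < 1/t := by positivity
    have h2 := hφconv t ht 0 Set.self_mem_Ici (1/t) ht1.le (by rw [div_le_one (by linarith)]; linarith)
    have e : (1/t : ℝ) * t + (1 - 1/t) * 0 = 1 := by field_simp; ring
    rw [e, hφ1, hbot] at h2
    have : ((1/t : ℝ) : EReal) * (⊥ : EReal) = ⊥ := EReal.coe_mul_bot_of_pos ht1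
    rw [this, EReal.bot_add] at h2
    exact absurd (le_bot_iff.1 h2) (by simp)

include hφ1 hφconv in
lemma phi_three_point {x y z : ℝ} (hx : 0 ≤ x) (hxT : φ x ≠ ⊤) (hzT : φ z ≠ ⊤)
    (hxy : x < y) (hyz : y < z) :
    φ y ≠ ⊤ ∧ (z - x) * (φ y).toReal ≤ (z - y) * (φ x).toReal + (y - x) * (φ z).toReal := by
  have hz0 : (0:ℝ) ≤ z := by linarith
  have hy0 : (0:ℝ) ≤ y := by linarith
  have hzx : (0:ℝ) < z - x := by linarith
  set θ : ℝ := (z - y)/(z - x) with hθ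
  have hθ0 : 0 ≤ θ := div_nonneg (by linarith) hzx.le
  have hθ1 : θ ≤ 1 := by rw [hθ, div_le_one hzx]; linarith
  have h2 := hφconv x hx z hz0 θ hθ0 hθ1
  have e : θ * x + (1 - θ) * z = y := by rw [hθ]; field_simp; ring
  rw [e] at h2
  have hxB := phi_ne_bot φ hφ1 hφconv x hx
  have hzB := phi_ne_bot φ hφ1 hφconv z hz0
  have hyB := phi_ne_bot φ hφ1 hφconv y hy0
  have hxco : φ x = (((φ x).toReal : ℝ) : EReal) := (EReal.coe_toReal hxT hxB).symm
  have hzco : φ z = (((φ z).toReal : ℝ) : EReal) := (EReal.coe_toReal hzT hzB).symm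
  rw [hxco, hzco, ← EReal.coe_mul, ← EReal.coe_mul, ← EReal.coe_add] at h2
  have hyT : φ y ≠ ⊤ := by
    intro hT
    rw [hT] at h2
    exact absurd (top_le_iff.1 h2) (EReal.coe_ne_top _)
  refine ⟨hyT, ?_⟩
  have hyco : φ y = (((φ y).toReal : ℝ) : EReal) := (EReal.coe_toReal hyT hyB).symm
  rw [hyco] at h2
  have h3 : (φ y).toReal ≤ θ * (φ x).toReal + (1 - θ) * (φ z).toReal :=
    EReal.coe_le_coe_iff.1 h2
  have hth : θ * (z - x) = z - y := by rw [hθ]; field_simp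
  have h1θ : (1 - θ) * (z - x) = y - x := by nlinarith [hth]
  have h4 := mul_le_mul_of_nonneg_right h3 hzx.le
  have e1 : (θ * (φ x).toReal + (1 - θ) * (φ z).toReal) * (z - x)
      = (z - y) * (φ x).toReal + (y - x) * (φ z).toReal := by
    linear_combination (φ x).toReal * hth + (φ z).toReal * h1θ
  rw [e1] at h4
  nlinarith [h4]

include hφ1 hφconv in
lemma phi_minorant : ∃ m δ : ℝ, 0 ≤ δ ∧
    ∀ t : ℝ, 0 ≤ t → ((m * (t - 1) - δ : ℝ) : EReal) ≤ φ t := by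
  classical
  by_cases hD : ∃ u : ℝ, 0 ≤ u ∧ φ u ≠ ⊤ ∧ u ≠ 1
  · obtain ⟨u, hu0, huT, hu1⟩ := hD
    set p : ℝ := min u 1 with hp
    set q : ℝ := max u 1 with hq
    have hpq : p < q := by
      rcases lt_or_gt_of_ne hu1 with h | h
      · rw [hp, hq, min_eq_left h.le, max_eq_right h.le]; exact h
      · rw [hp, hq, min_eq_right h.le, max_eq_left h.le]; exact h
    have hp0 : 0 ≤ p := le_min hu0 zero_le_one
    have hpT : φ p ≠ ⊤ := by
      rcases le_total u 1 with h | h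
      · rw [hp, min_eq_left h]; exact huT
      · rw [hp, min_eq_right h]; rw [hφ1]; exact (by simp)
    have hqT : φ q ≠ ⊤ := by
      rcases le_total u 1 with h | h
      · rw [hq, max_eq_right h]; rw [hφ1]; exact (by simp)
      · rw [hq, max_eq_left h]; exact huT
    set u₀ : ℝ := (p + q)/2 with hu₀
    have hpu₀ : p < u₀ := by rw [hu₀]; linarith
    have hu₀q : u₀ < q := by rw [hu₀]; linarith
    have hu₀0 : 0 ≤ u₀ := by linarith
    obtain ⟨hu₀T, -⟩ := phi_three_point φ hφ1 hφconv hp0 hpT hqT hpu₀ hu₀q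
    set φr : ℝ → ℝ := fun v => (φ v).toReal with hφr
    set SL : Set ℝ := (fun v => (φr v - φr u₀)/(v - u₀)) ''
      {v | u₀ < v ∧ φ v ≠ ⊤} with hSL
    have hne : SL.Nonempty := ⟨_, ⟨q, ⟨hu₀q, hqT⟩, rfl⟩⟩
    have hbdd : BddBelow SL := by
      refine ⟨(φr u₀ - φr p)/(u₀ - p), ?_⟩
      rintro _ ⟨v, ⟨hv1, hv2⟩, rfl⟩
      have h1 : (0:ℝ) < u₀ - p := by linarith
      have h2 : (0:ℝ) < v - u₀ := by linarith
      obtain ⟨-, htp⟩ := phi_three_point φ hφ1 hφconv hp0 hpT hv2 hpu₀ hv1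
      rw [div_le_div_iff₀ h1 h2]
      nlinarith
    set g : ℝ := sInf SL with hg
    have hM : ∀ t : ℝ, 0 ≤ t → φ t ≠ ⊤ → φr u₀ + g * (t - u₀) ≤ φr t := by
      intro t ht htT
      rcases lt_trichotomy t u₀ with h | h | h
      · have key : (φr u₀ - φr t)/(u₀ - t) ≤ g := by
          apply le_csInf hne
          rintro _ ⟨v, ⟨hv1, hv2⟩, rfl⟩
          have h1 : (0:ℝ) < u₀ - t := by linarith
          have h2 : (0:ℝ) < v - u₀ := by linarith
          obtain ⟨-, htp⟩ := phi_three_point φ hφ1 hφconv ht htT hv2 h hv1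
          rw [div_le_div_iff₀ h1 h2]
          nlinarith
        have h1 : (0:ℝ) < u₀ - t := by linarith
        have h3 : ((φr u₀ - φr t)/(u₀ - t)) * (u₀ - t) = φr u₀ - φr t := by field_simp
        nlinarith [mul_le_mul_of_nonneg_right key h1.le, h3]
      · simp [h]
      · have key : g ≤ (φr t - φr u₀)/(t - u₀) := csInf_le hbdd ⟨t, ⟨h, htT⟩, rfl⟩
        have h1 : (0:ℝ) < t - u₀ := by linarith
        have h3 : ((φr t - φr u₀)/(t - u₀)) * (t - u₀) = φr t - φr u₀ := by field_simp
        nlinarith [mul_le_mul_of_nonneg_right key h1.le, h3]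
    refine ⟨g, -(φr u₀ + g * (1 - u₀)), ?_, ?_⟩
    · have h1 := hM 1 zero_le_one (by rw [hφ1]; simp)
      have hφr1 : φr 1 = 0 := by rw [hφr]; simp [hφ1]
      rw [hφr1] at h1
      linarith
    · intro t ht
      by_cases htT : φ t = ⊤
      · rw [htT]; exact le_top
      · have h1 := hM t ht htT
        have hco : φ t = ((φr t : ℝ) : EReal) :=
          (EReal.coe_toReal htT (phi_ne_bot φ hφ1 hφconv t ht)).symm
        rw [hco]
        apply EReal.coe_le_coe_iff.2
        linarith
  · push_neg at hD
    refine ⟨0, 0, le_refl 0, ?_⟩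
    intro t ht
    by_cases htT : φ t = ⊤
    · rw [htT]; exact le_top
    · have := hD t ht htT
      rw [this, hφ1]
      norm_num
end

set_option maxHeartbeats 2000000 in
/-- Strong Lagrangian duality for distributionally robust optimization over a
φ-divergence ball: the worst-case expectation max{Σ wᵢ fᵢ : w ∈ W_φ^τ} equals
the dual inf over λ ≥ 0, η of τλ + η + λ Σ wᵢ⁰ φ*((fᵢ − η)/λ), where the
perspective λφ*(s/λ) at λ = 0 is the recession term sup_{t ≥ 0} s·t. -/
theorem phi_divergence_duality (n : ℕ) (f : Fin n → ℝ) (w0 : Fin n → ℝ)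
    (hw0pos : ∀ i, 0 < w0 i) (hw0sum : ∑ i, w0 i = 1)
    (φ : ℝ → EReal) (hφ1 : φ 1 = 0) (hφneg : ∀ t : ℝ, t < 0 → φ t = ⊤)
    (hφconv : ∀ a ∈ Set.Ici (0 : ℝ), ∀ b ∈ Set.Ici (0 : ℝ), ∀ t : ℝ,
      0 ≤ t → t ≤ 1 →
      φ (t * a + (1 - t) * b) ≤ (t : EReal) * φ a + ((1 - t : ℝ) : EReal) * φ b)
    (τ : ℝ) (hτ : 0 < τ) :
    sSup {v : EReal | ∃ w : Fin n → ℝ, (∀ i, 0 ≤ w i) ∧ (∑ i, w i) = 1 ∧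
        (∑ i, (w0 i : EReal) * φ (w i / w0 i)) ≤ (τ : EReal) ∧
        v = ((∑ i, w i * f i : ℝ) : EReal)} =
    sInf {v : EReal | ∃ lam η : ℝ, 0 ≤ lam ∧
        v = ((τ * lam + η : ℝ) : EReal) +
          ∑ i, (w0 i : EReal) *
            (if 0 < lam then
              (lam : EReal) *
                (⨆ t : {t : ℝ // 0 ≤ t},
                  ((((f i - η) / lam) * (t : ℝ) : ℝ) : EReal) - φ (t : ℝ))
            else
              ⨆ t : {t : ℝ // 0 ≤ t}, (((f i - η) * (t : ℝ) : ℝ) : EReal))} := by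
  classical
  rcases Nat.eq_zero_or_pos n with h0 | h0
  · exfalso; subst h0; simp at hw0sum
  haveI : Nonempty (Fin n) := ⟨⟨0, h0⟩⟩
  set PS : Set EReal := {v : EReal | ∃ w : Fin n → ℝ, (∀ i, 0 ≤ w i) ∧ (∑ i, w i) = 1 ∧
        (∑ i, (w0 i : EReal) * φ (w i / w0 i)) ≤ (τ : EReal) ∧
        v = ((∑ i, w i * f i : ℝ) : EReal)} with hPS
  set DU : Set EReal := {v : EReal | ∃ lam η : ℝ, 0 ≤ lam ∧
        v = ((τ * lam + η : ℝ) : EReal) +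
          ∑ i, (w0 i : EReal) *
            (if 0 < lam then
              (lam : EReal) *
                (⨆ t : {t : ℝ // 0 ≤ t},
                  ((((f i - η) / lam) * (t : ℝ) : ℝ) : EReal) - φ (t : ℝ))
            else
              ⨆ t : {t : ℝ // 0 ≤ t}, (((f i - η) * (t : ℝ) : ℝ) : EReal))} with hDU
  obtain ⟨m, δ, hδ, hmin⟩ := phi_minorant φ hφ1 hφconv
  obtain ⟨jmax, hjmax⟩ := Finite.exists_max f
  set M : ℝ := f jmax with hM
  set S0 : ℝ := ∑ i, w0 i * f i with hS0
  have hφbot := phi_ne_bot φ hφ1 hφconv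
  have hphiR : ∀ t : ℝ, 0 ≤ t → φ t ≠ ⊤ → φ t = (((φ t).toReal : ℝ) : EReal) :=
    fun t ht hT => (EReal.coe_toReal hT (hφbot t ht)).symm
  have htd : ∀ (w : Fin n → ℝ), (∀ i, 0 ≤ w i) → ∀ i, 0 ≤ w i / w0 i :=
    fun w hw i => div_nonneg (hw i) (hw0pos i).le
  set Iphir : (Fin n → ℝ) → ℝ := fun w => ∑ i, w0 i * (φ (w i / w0 i)).toReal with hIphir
  -- feasibility implies finiteness of each φ term
  have hterm_lb : ∀ (w : Fin n → ℝ), (∀ i, 0 ≤ w i) → ∀ i,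
      ((w0 i * (m * (w i / w0 i - 1) - δ) : ℝ) : EReal) ≤ (w0 i : EReal) * φ (w i / w0 i) := by
    intro w hw i
    rw [EReal.coe_mul]
    exact mul_le_mul_of_nonneg_left (hmin _ (htd w hw i)) (EReal.coe_nonneg.2 (hw0pos i).le)
  have feasfin : ∀ (w : Fin n → ℝ) (s : ℝ), (∀ i, 0 ≤ w i) →
      (∑ i, (w0 i : EReal) * φ (w i / w0 i)) ≤ (s : EReal) → ∀ j, φ (w j / w0 j) ≠ ⊤ := by
    intro w s hw hle j hT
    have e1 : (w0 j : EReal) * φ (w j / w0 j) = ⊤ := by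
      rw [hT]; exact EReal.coe_mul_top_of_pos (hw0pos j)
    have e2 : ∑ i, (w0 i : EReal) * φ (w i / w0 i)
        = (w0 j : EReal) * φ (w j / w0 j)
          + ∑ i ∈ univ.erase j, (w0 i : EReal) * φ (w i / w0 i) :=
      (Finset.add_sum_erase univ (fun i => (w0 i : EReal) * φ (w i / w0 i)) (mem_univ j)).symm
    have e3 : ((∑ i ∈ univ.erase j, (w0 i * (m * (w i / w0 i - 1) - δ)) : ℝ) : EReal)
        ≤ ∑ i ∈ univ.erase j, (w0 i : EReal) * φ (w i / w0 i) := by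
      rw [coe_sum']
      exact Finset.sum_le_sum fun i _ => hterm_lb w hw i
    have e4 : ∑ i ∈ univ.erase j, (w0 i : EReal) * φ (w i / w0 i) ≠ ⊥ :=
      fun hB => absurd (hB ▸ e3) (EReal.bot_lt_coe _).not_ge
    rw [e2, e1, EReal.top_add_of_ne_bot e4] at hle
    exact absurd hle (EReal.coe_lt_top s).not_ge
  -- EReal divergence equals coe of real divergence when all terms finite
  have IcoE : ∀ (w : Fin n → ℝ), (∀ i, 0 ≤ w i) → (∀ j, φ (w j / w0 j) ≠ ⊤) →
      (∑ i, (w0 i : EReal) * φ (w i / w0 i)) = ((Iphir w : ℝ) : EReal) := by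
    intro w hw hfin
    rw [hIphir, coe_sum']
    refine Finset.sum_congr rfl fun i _ => ?_
    rw [EReal.coe_mul]
    congr 1
    exact hphiR _ (htd w hw i) (hfin i)
  -- lower bound for the real divergence
  have Ilb : ∀ (w : Fin n → ℝ), (∀ i, 0 ≤ w i) → (∀ j, φ (w j / w0 j) ≠ ⊤) →
      m * ((∑ i, w i) - 1) - δ ≤ Iphir w := by
    intro w hw hfin
    have e1 : ∀ i : Fin n, w0 i * (m * (w i / w0 i - 1) - δ) ≤ w0 i * (φ (w i / w0 i)).toReal := by
      intro i
      have h2 := hterm_lb w hw i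
      rw [hphiR _ (htd w hw i) (hfin i), ← EReal.coe_mul, EReal.coe_le_coe_iff] at h2
      exact h2
    have e2 : ∑ i, w0 i * (m * (w i / w0 i - 1) - δ) = m * ((∑ i, w i) - 1) - δ := by
      have e3 : ∀ i : Fin n, w0 i * (m * (w i / w0 i - 1) - δ)
          = m * w i - m * w0 i - δ * w0 i := by
        intro i
        have h4 : w0 i ≠ 0 := (hw0pos i).ne'
        field_simp
      rw [Finset.sum_congr rfl fun i _ => e3 i]
      rw [Finset.sum_sub_distrib, Finset.sum_sub_distrib, ← Finset.mul_sum, ← Finset.mul_sum,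
        ← Finset.mul_sum, hw0sum]
      ring
    calc m * ((∑ i, w i) - 1) - δ = ∑ i, w0 i * (m * (w i / w0 i - 1) - δ) := e2.symm
      _ ≤ ∑ i, w0 i * (φ (w i / w0 i)).toReal := Finset.sum_le_sum fun i _ => e1 i
      _ = Iphir w := rfl
  -- weak duality
  have hweak : ∀ x ∈ PS, ∀ v ∈ DU, x ≤ v := by
    rintro x ⟨w, hw, hw1, hwτ, rfl⟩ v ⟨lam, η, hlam, rfl⟩
    have hfin := feasfin w τ hw hwτ
    have hIle : Iphir w ≤ τ := by
      have := hwτ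
      rw [IcoE w hw hfin, EReal.coe_le_coe_iff] at this
      exact this
    rcases hlam.lt_or_eq with hpos | hzero
    · simp only [if_pos hpos]
      have perI : ∀ i : Fin n,
          ((w0 i * (lam * ((f i - η)/lam * (w i / w0 i) - (φ (w i / w0 i)).toReal)) : ℝ) : EReal)
          ≤ (w0 i : EReal) * ((lam : EReal) *
            (⨆ t : {t : ℝ // 0 ≤ t},
              ((((f i - η) / lam) * (t : ℝ) : ℝ) : EReal) - φ (t : ℝ))) := by
        intro i
        have h1 : ((((f i - η)/lam * (w i / w0 i) - (φ (w i / w0 i)).toReal : ℝ)) : EReal)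
            ≤ ⨆ t : {t : ℝ // 0 ≤ t},
              ((((f i - η) / lam) * (t : ℝ) : ℝ) : EReal) - φ (t : ℝ) := by
          have h2 : ((((f i - η)/lam * (w i / w0 i) - (φ (w i / w0 i)).toReal : ℝ)) : EReal)
              = ((((f i - η) / lam) * ((w i / w0 i) : ℝ) : ℝ) : EReal) - φ (w i / w0 i) := by
            rw [hphiR _ (htd w hw i) (hfin i)]
            exact EReal.coe_sub _ _
          rw [h2]
          exact le_iSup (fun t : {t : ℝ // 0 ≤ t} =>
            ((((f i - η) / lam) * (t : ℝ) : ℝ) : EReal) - φ (t : ℝ)) ⟨w i / w0 i, htd w hw i⟩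
        calc ((w0 i * (lam * ((f i - η)/lam * (w i / w0 i) - (φ (w i / w0 i)).toReal)) : ℝ) : EReal)
            = (w0 i : EReal) * ((lam : EReal) *
              ((((f i - η)/lam * (w i / w0 i) - (φ (w i / w0 i)).toReal : ℝ)) : EReal)) := by
              rw [← EReal.coe_mul, ← EReal.coe_mul]
          _ ≤ _ := by
              apply mul_le_mul_of_nonneg_left _ (EReal.coe_nonneg.2 (hw0pos i).le)
              exact mul_le_mul_of_nonneg_left h1 (EReal.coe_nonneg.2 hpos.le)
      have total : ((τ * lam + η + ∑ i, w0 i * (lam * ((f i - η)/lam * (w i / w0 i)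
            - (φ (w i / w0 i)).toReal)) : ℝ) : EReal)
          ≤ ((τ * lam + η : ℝ) : EReal) + ∑ i, (w0 i : EReal) * ((lam : EReal) *
            (⨆ t : {t : ℝ // 0 ≤ t},
              ((((f i - η) / lam) * (t : ℝ) : ℝ) : EReal) - φ (t : ℝ))) := by
        rw [EReal.coe_add, coe_sum']
        exact add_le_add_right (Finset.sum_le_sum fun i _ => perI i) _
      refine le_trans ?_ total
      apply EReal.coe_le_coe_iff.2
      have S1 : ∑ i, w0 i * (lam * ((f i - η)/lam * (w i / w0 i) - (φ (w i / w0 i)).toReal))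
          = (∑ i, (f i - η) * w i) - lam * Iphir w := by
        rw [hIphir, Finset.mul_sum, ← Finset.sum_sub_distrib]
        refine Finset.sum_congr rfl fun i _ => ?_
        have h4 : w0 i ≠ 0 := (hw0pos i).ne'
        have h5 : lam ≠ 0 := hpos.ne'
        field_simp
      have S2 : ∑ i, (f i - η) * w i = (∑ i, w i * f i) - η := by
        have : ∀ i : Fin n, (f i - η) * w i = w i * f i - η * w i := fun i => by ring
        rw [Finset.sum_congr rfl fun i _ => this i, Finset.sum_sub_distrib, ← Finset.mul_sum,
          hw1, mul_one]
      rw [S1, S2]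
      nlinarith [mul_nonneg hpos.le (sub_nonneg.2 hIle)]
    · rw [← hzero]
      simp only [lt_irrefl, if_neg (lt_irrefl (0:ℝ))]
      have perI : ∀ i : Fin n,
          ((w0 i * ((f i - η) * (w i / w0 i)) : ℝ) : EReal)
          ≤ (w0 i : EReal) * (⨆ t : {t : ℝ // 0 ≤ t}, (((f i - η) * (t : ℝ) : ℝ) : EReal)) := by
        intro i
        rw [EReal.coe_mul]
        apply mul_le_mul_of_nonneg_left _ (EReal.coe_nonneg.2 (hw0pos i).le)
        exact le_iSup (fun t : {t : ℝ // 0 ≤ t} => (((f i - η) * (t : ℝ) : ℝ) : EReal))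
          ⟨w i / w0 i, htd w hw i⟩
      have total : ((τ * 0 + η + ∑ i, w0 i * ((f i - η) * (w i / w0 i)) : ℝ) : EReal)
          ≤ ((τ * 0 + η : ℝ) : EReal) + ∑ i, (w0 i : EReal) *
            (⨆ t : {t : ℝ // 0 ≤ t}, (((f i - η) * (t : ℝ) : ℝ) : EReal)) := by
        rw [EReal.coe_add, coe_sum']
        exact add_le_add_right (Finset.sum_le_sum fun i _ => perI i) _
      refine le_trans ?_ total
      apply EReal.coe_le_coe_iff.2
      have S1 : ∑ i, w0 i * ((f i - η) * (w i / w0 i)) = (∑ i, w i * f i) - η := by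
        have e : ∀ i : Fin n, w0 i * ((f i - η) * (w i / w0 i)) = w i * f i - η * w i := by
          intro i
          have h4 : w0 i ≠ 0 := (hw0pos i).ne'
          field_simp
        rw [Finset.sum_congr rfl fun i _ => e i, Finset.sum_sub_distrib, ← Finset.mul_sum,
          hw1, mul_one]
      rw [S1]
      linarith
  -- strong duality
  have hstrong : sInf DU ≤ sSup PS := by
    have hw0mem : ((S0 : ℝ) : EReal) ∈ PS := by
      refine ⟨w0, fun i => (hw0pos i).le, hw0sum, ?_, rfl⟩
      have e : ∀ i : Fin n, (w0 i : EReal) * φ (w0 i / w0 i) = 0 := by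
        intro i; rw [div_self (hw0pos i).ne', hφ1, mul_zero]
      rw [Finset.sum_congr rfl fun i _ => e i, Finset.sum_const, smul_zero]
      exact EReal.coe_nonneg.2 hτ.le
    have hDual1 : ∀ (lam η : ℝ), 0 < lam → ∀ K : Fin n → ℝ,
        (∀ i, ∀ t : ℝ, 0 ≤ t → φ t ≠ ⊤ → (f i - η)/lam * t - (φ t).toReal ≤ K i) →
        sInf DU ≤ ((τ * lam + η + ∑ i, w0 i * (lam * K i) : ℝ) : EReal) := by
      intro lam η hpos K hK
      have hmem : (((τ * lam + η : ℝ) : EReal) +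
          ∑ i, (w0 i : EReal) *
            (if 0 < lam then
              (lam : EReal) *
                (⨆ t : {t : ℝ // 0 ≤ t},
                  ((((f i - η) / lam) * (t : ℝ) : ℝ) : EReal) - φ (t : ℝ))
            else
              ⨆ t : {t : ℝ // 0 ≤ t}, (((f i - η) * (t : ℝ) : ℝ) : EReal))) ∈ DU :=
        ⟨lam, η, hpos.le, rfl⟩
      refine le_trans (sInf_le hmem) ?_
      simp only [if_pos hpos]
      conv_rhs => rw [EReal.coe_add, coe_sum']
      apply add_le_add_right
      apply Finset.sum_le_sum
      intro i _
      have hsup : (⨆ t : {t : ℝ // 0 ≤ t},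
          ((((f i - η) / lam) * (t : ℝ) : ℝ) : EReal) - φ (t : ℝ)) ≤ ((K i : ℝ) : EReal) := by
        apply iSup_le
        rintro ⟨t, ht⟩
        by_cases hT : φ t = ⊤
        · rw [hT, EReal.sub_top]; exact bot_le
        · rw [hphiR t ht hT, ← EReal.coe_sub]
          exact EReal.coe_le_coe_iff.2 (hK i t ht hT)
      calc (w0 i : EReal) * ((lam : EReal) * (⨆ t : {t : ℝ // 0 ≤ t},
              ((((f i - η) / lam) * (t : ℝ) : ℝ) : EReal) - φ (t : ℝ)))
          ≤ (w0 i : EReal) * ((lam : EReal) * ((K i : ℝ) : EReal)) := by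
            apply mul_le_mul_of_nonneg_left _ (EReal.coe_nonneg.2 (hw0pos i).le)
            exact mul_le_mul_of_nonneg_left hsup (EReal.coe_nonneg.2 hpos.le)
        _ = ((w0 i * (lam * K i) : ℝ) : EReal) := by rw [← EReal.coe_mul, ← EReal.coe_mul]
    have hEps : ∀ r C : ℝ, 0 < C →
        (∀ lam : ℝ, 0 < lam → sInf DU ≤ ((r + lam * C : ℝ) : EReal)) →
        sInf DU ≤ ((r : ℝ) : EReal) := by
      intro r C hC H
      apply le_coe_of_forall_eps
      intro ε hε
      have h1 := H (ε / C) (div_pos hε hC)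
      have e : r + (ε/C)*C = r + ε := by field_simp
      rwa [e] at h1
    have hDualSum : ∀ (lam η B : ℝ), 0 < lam →
        (∀ w : Fin n → ℝ, (∀ i, 0 ≤ w i) → (∀ j, φ (w j / w0 j) ≠ ⊤) →
          (∑ i, w i * f i) - η * (∑ i, w i) - lam * Iphir w ≤ B) →
        sInf DU ≤ ((τ * lam + η + B : ℝ) : EReal) := by
      intro lam η B hpos hbound
      have hmem : (((τ * lam + η : ℝ) : EReal) +
          ∑ i, (w0 i : EReal) *
            (if 0 < lam then
              (lam : EReal) *
                (⨆ t : {t : ℝ // 0 ≤ t},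
                  ((((f i - η) / lam) * (t : ℝ) : ℝ) : EReal) - φ (t : ℝ))
            else
              ⨆ t : {t : ℝ // 0 ≤ t}, (((f i - η) * (t : ℝ) : ℝ) : EReal))) ∈ DU :=
        ⟨lam, η, hpos.le, rfl⟩
      refine le_trans (sInf_le hmem) ?_
      simp only [if_pos hpos]
      have hga : ∀ i : Fin n, (fun t : {t : ℝ // 0 ≤ t} =>
          ((((f i - η) / lam) * (t : ℝ) : ℝ) : EReal) - φ (t : ℝ))
            (⟨1, zero_le_one⟩ : {t : ℝ // 0 ≤ t}) = (((f i - η)/lam : ℝ) : EReal) := by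
        intro i
        show ((((f i - η) / lam) * ((1:ℝ)) : ℝ) : EReal) - φ (1:ℝ) = (((f i - η)/lam : ℝ) : EReal)
        rw [hφ1, sub_zero, mul_one]
      have hH : ∀ tv : Fin n → {t : ℝ // 0 ≤ t},
          ∑ i, ((w0 i * lam : ℝ) : EReal) *
            ((fun t : {t : ℝ // 0 ≤ t} =>
              ((((f i - η) / lam) * (t : ℝ) : ℝ) : EReal) - φ (t : ℝ)) (tv i))
          ≤ ((B : ℝ) : EReal) := by
        intro tv
        by_cases hall : ∀ j : Fin n, φ ((tv j : ℝ)) ≠ ⊤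
        · set w : Fin n → ℝ := fun i => w0 i * (tv i : ℝ) with hwdef
          have hwnn : ∀ i, 0 ≤ w i := fun i => mul_nonneg (hw0pos i).le (tv i).2
          have hwt : ∀ i, w i / w0 i = (tv i : ℝ) := by
            intro i
            rw [hwdef]
            simp only
            rw [mul_comm, mul_div_assoc, div_self (hw0pos i).ne', mul_one]
          have hfin : ∀ j, φ (w j / w0 j) ≠ ⊤ := fun j => by rw [hwt j]; exact hall j
          have hterm : ∀ i : Fin n, ((w0 i * lam : ℝ) : EReal) *
              (((((f i - η) / lam) * (tv i : ℝ) : ℝ) : EReal) - φ ((tv i : ℝ)))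
              = ((w0 i * lam * ((f i - η)/lam * (tv i : ℝ)
                  - (φ ((tv i : ℝ))).toReal) : ℝ) : EReal) := by
            intro i
            conv_lhs => rw [hphiR _ (tv i).2 (hall i)]
            rw [← EReal.coe_sub, ← EReal.coe_mul]
          rw [Finset.sum_congr rfl fun i _ => hterm i, ← coe_sum']
          apply EReal.coe_le_coe_iff.2
          have h2 := hbound w hwnn hfin
          have e1 : ∑ i, w0 i * lam * ((f i - η)/lam * (tv i : ℝ)
                - (φ ((tv i : ℝ))).toReal)
              = (∑ i, w i * f i) - η * (∑ i, w i) - lam * Iphir w := by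
            have per : ∀ i : Fin n, w0 i * lam * ((f i - η)/lam * (tv i : ℝ)
                - (φ ((tv i : ℝ))).toReal)
                = w i * f i - η * w i - lam * (w0 i * (φ (w i / w0 i)).toReal) := by
              intro i
              rw [hwt i]
              rw [hwdef]
              simp only
              have h5 : lam ≠ 0 := hpos.ne'
              field_simp
            rw [Finset.sum_congr rfl fun i _ => per i, Finset.sum_sub_distrib,
              Finset.sum_sub_distrib, ← Finset.mul_sum, ← Finset.mul_sum]
          rw [e1]
          linarith [h2]
        · push_neg at hall
          obtain ⟨j, hj⟩ := hall
          have hbot : ∑ i, ((w0 i * lam : ℝ) : EReal) *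
              ((fun t : {t : ℝ // 0 ≤ t} =>
                ((((f i - η) / lam) * (t : ℝ) : ℝ) : EReal) - φ (t : ℝ)) (tv i)) = ⊥ := by
            apply sum_bot' univ _ j (mem_univ j)
            show ((w0 j * lam : ℝ) : EReal) *
              (((((f j - η) / lam) * (tv j : ℝ) : ℝ) : EReal) - φ ((tv j : ℝ))) = ⊥
            rw [hj, EReal.sub_top]
            exact EReal.coe_mul_bot_of_pos (mul_pos (hw0pos j) hpos)
          rw [hbot]
          exact bot_le
      have hsum := sumsup (⟨1, zero_le_one⟩ : {t : ℝ // 0 ≤ t}) (fun i => w0 i * lam)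
        (fun i => mul_pos (hw0pos i) hpos)
        (fun i => fun t : {t : ℝ // 0 ≤ t} =>
          ((((f i - η) / lam) * (t : ℝ) : ℝ) : EReal) - φ (t : ℝ))
        (fun i => (f i - η)/lam) hga (B) hH
      have efold : ∀ i : Fin n, (w0 i : EReal) * ((lam : EReal) *
          (⨆ t : {t : ℝ // 0 ≤ t},
            ((((f i - η) / lam) * (t : ℝ) : ℝ) : EReal) - φ (t : ℝ)))
          = ((w0 i * lam : ℝ) : EReal) *
            (⨆ t : {t : ℝ // 0 ≤ t},
              ((((f i - η) / lam) * (t : ℝ) : ℝ) : EReal) - φ (t : ℝ)) := by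
        intro i
        rw [EReal.coe_mul, mul_assoc]
      calc ((τ * lam + η : ℝ) : EReal) + ∑ i, (w0 i : EReal) * ((lam : EReal) *
            (⨆ t : {t : ℝ // 0 ≤ t},
              ((((f i - η) / lam) * (t : ℝ) : ℝ) : EReal) - φ (t : ℝ)))
          = ((τ * lam + η : ℝ) : EReal) + ∑ i, ((w0 i * lam : ℝ) : EReal) *
            (⨆ t : {t : ℝ // 0 ≤ t},
              ((((f i - η) / lam) * (t : ℝ) : ℝ) : EReal) - φ (t : ℝ)) := by
            rw [Finset.sum_congr rfl fun i _ => efold i]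
        _ ≤ ((τ * lam + η : ℝ) : EReal) + ((B : ℝ) : EReal) :=
            add_le_add_right hsum _
        _ = ((τ * lam + η + B : ℝ) : EReal) := by
            rw [← EReal.coe_add]

    -- a useful simplification of the dual bound used in the one-sided cases
    have hOneSided : ∀ (η₀ : ℝ), (∀ i, ∀ lam : ℝ, 0 < lam → ∀ t : ℝ, 0 ≤ t → φ t ≠ ⊤ →
        (f i - (η₀ - lam*m)) * t - lam * (φ t).toReal ≤ (f i - (η₀ - lam*m)) + lam * δ) →
        sInf DU ≤ ((S0 : ℝ) : EReal) := by
      intro η₀ hkey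
      apply hEps S0 (τ + δ) (by linarith)
      intro lam hpos
      have hK : ∀ i, ∀ t : ℝ, 0 ≤ t → φ t ≠ ⊤ →
          (f i - (η₀ - lam*m))/lam * t - (φ t).toReal ≤ (f i - (η₀ - lam*m) + lam*δ)/lam := by
        intro i t ht hT
        have h1 := hkey i lam hpos t ht hT
        have e : (f i - (η₀ - lam*m))/lam * t - (φ t).toReal
            = ((f i - (η₀ - lam*m)) * t - lam * (φ t).toReal)/lam := by
          field_simp
        rw [e, div_le_div_iff_of_pos_right hpos]
        exact h1
      have h2 := hDual1 lam (η₀ - lam*m) hpos _ hK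
      have e : τ*lam + (η₀ - lam*m) + ∑ i, w0 i * (lam * ((f i - (η₀ - lam*m) + lam*δ)/lam))
          = S0 + lam*(τ+δ) := by
        have e1 : ∀ i : Fin n, w0 i * (lam * ((f i - (η₀ - lam*m) + lam*δ)/lam))
            = w0 i * f i - (η₀ - lam*m) * w0 i + lam*δ*w0 i := by
          intro i
          have h5 : lam ≠ 0 := hpos.ne'
          field_simp
        rw [Finset.sum_congr rfl fun i _ => e1 i]
        rw [Finset.sum_add_distrib, Finset.sum_sub_distrib, ← Finset.mul_sum, ← Finset.mul_sum,
          hw0sum, ← hS0]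
        ring
      rwa [e] at h2
    by_cases hLeft : ∃ p : ℝ, 0 ≤ p ∧ φ p ≠ ⊤ ∧ p < 1
    · by_cases hRight : ∃ q : ℝ, 0 ≤ q ∧ φ q ≠ ⊤ ∧ 1 < q
      · -- interior case
        obtain ⟨p, hp0, hpT, hp1⟩ := hLeft
        obtain ⟨q, hq0', hqT, h1q⟩ := hRight
        have h1T : φ (1:ℝ) ≠ ⊤ := by rw [hφ1]; simp
        have hseg : ∀ c : ℝ, p ≤ c → c ≤ q → φ c ≠ ⊤ := by
          intro c h1 h2
          rcases eq_or_lt_of_le h1 with e | h1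
          · rw [← e]; exact hpT
          rcases eq_or_lt_of_le h2 with e | h2
          · rw [e]; exact hqT
          exact (phi_three_point φ hφ1 hφconv hp0 hpT hqT h1 h2).1
        have hconvR : ∀ (t1 t2 : ℝ), 0 ≤ t1 → 0 ≤ t2 → φ t1 ≠ ⊤ → φ t2 ≠ ⊤ →
            ∀ θ : ℝ, 0 ≤ θ → θ ≤ 1 →
            φ (θ*t1 + (1-θ)*t2) ≠ ⊤ ∧
            (φ (θ*t1 + (1-θ)*t2)).toReal ≤ θ*(φ t1).toReal + (1-θ)*(φ t2).toReal := by
          intro t1 t2 ht1 ht2 hT1 hT2 θ hθ0 hθ1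
          have h2 := hφconv t1 ht1 t2 ht2 θ hθ0 hθ1
          rw [hphiR t1 ht1 hT1, hphiR t2 ht2 hT2, ← EReal.coe_mul, ← EReal.coe_mul,
            ← EReal.coe_add] at h2
          have hcnn : 0 ≤ θ*t1 + (1-θ)*t2 :=
            add_nonneg (mul_nonneg hθ0 ht1) (mul_nonneg (by linarith) ht2)
          have hcT : φ (θ*t1 + (1-θ)*t2) ≠ ⊤ := by
            intro h
            rw [h] at h2
            exact absurd (top_le_iff.1 h2) (EReal.coe_ne_top _)
          refine ⟨hcT, ?_⟩
          rw [hphiR _ hcnn hcT, EReal.coe_le_coe_iff] at h2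
          exact h2
        have hIconv : ∀ (w1 w2 : Fin n → ℝ), (∀ i, 0 ≤ w1 i) → (∀ i, 0 ≤ w2 i) →
            (∀ j, φ (w1 j / w0 j) ≠ ⊤) → (∀ j, φ (w2 j / w0 j) ≠ ⊤) →
            ∀ θ : ℝ, 0 ≤ θ → θ ≤ 1 →
            (∀ j, φ ((θ*w1 j + (1-θ)*w2 j) / w0 j) ≠ ⊤) ∧
            Iphir (fun i => θ*w1 i + (1-θ)*w2 i) ≤ θ * Iphir w1 + (1-θ) * Iphir w2 := by
          intro w1 w2 hw1 hw2 hf1 hf2 θ hθ0 hθ1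
          have hcoord : ∀ j : Fin n, (θ*w1 j + (1-θ)*w2 j) / w0 j
              = θ*(w1 j / w0 j) + (1-θ)*(w2 j / w0 j) := by
            intro j
            field_simp
          have hper := fun j => hconvR (w1 j / w0 j) (w2 j / w0 j)
            (htd w1 hw1 j) (htd w2 hw2 j) (hf1 j) (hf2 j) θ hθ0 hθ1
          constructor
          · intro j
            rw [hcoord j]
            exact (hper j).1
          · rw [hIphir]
            have e1 : ∀ j : Fin n, w0 j * (φ ((θ*w1 j + (1-θ)*w2 j) / w0 j)).toReal
                ≤ θ * (w0 j * (φ (w1 j / w0 j)).toReal)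
                  + (1-θ) * (w0 j * (φ (w2 j / w0 j)).toReal) := by
              intro j
              have h3 : (φ ((θ*w1 j + (1-θ)*w2 j) / w0 j)).toReal
                  ≤ θ*(φ (w1 j / w0 j)).toReal + (1-θ)*(φ (w2 j / w0 j)).toReal := by
                rw [hcoord j]
                exact (hper j).2
              nlinarith [mul_le_mul_of_nonneg_left h3 (hw0pos j).le]
            calc ∑ j, w0 j * (φ ((θ*w1 j + (1-θ)*w2 j) / w0 j)).toReal
                ≤ ∑ j, (θ * (w0 j * (φ (w1 j / w0 j)).toReal)
                  + (1-θ) * (w0 j * (φ (w2 j / w0 j)).toReal)) :=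
                  Finset.sum_le_sum fun j _ => e1 j
              _ = θ * Iphir w1 + (1-θ) * Iphir w2 := by
                  rw [Finset.sum_add_distrib, ← Finset.mul_sum, ← Finset.mul_sum]
        -- the perturbation function V
        set P : ℝ → Set ℝ := fun s => {x | ∃ w : Fin n → ℝ, (∀ i, 0 ≤ w i) ∧ (∑ i, w i) = 1 ∧
            (∑ i, (w0 i : EReal) * φ (w i / w0 i)) ≤ (s : EReal) ∧ x = ∑ i, w i * f i} with hPdef
        have hPbdd : ∀ s : ℝ, BddAbove (P s) := by
          intro s
          refine ⟨M, ?_⟩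
          rintro x ⟨w, hw, hw1, -, rfl⟩
          calc ∑ i, w i * f i ≤ ∑ i, w i * M :=
              Finset.sum_le_sum fun i _ => mul_le_mul_of_nonneg_left (hjmax i) (hw i)
            _ = M := by rw [← Finset.sum_mul, hw1, one_mul]
        have hPw0 : ∀ s : ℝ, 0 ≤ s → S0 ∈ P s := by
          intro s hs
          refine ⟨w0, fun i => (hw0pos i).le, hw0sum, ?_, rfl⟩
          have e : ∀ i : Fin n, (w0 i : EReal) * φ (w0 i / w0 i) = 0 := by
            intro i; rw [div_self (hw0pos i).ne', hφ1, mul_zero]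
          rw [Finset.sum_congr rfl fun i _ => e i, Finset.sum_const, smul_zero]
          exact EReal.coe_nonneg.2 hs
        have hPcomb : ∀ (s1 s2 x1 x2 θ : ℝ), 0 ≤ θ → θ ≤ 1 → x1 ∈ P s1 → x2 ∈ P s2 →
            θ*x1 + (1-θ)*x2 ∈ P (θ*s1 + (1-θ)*s2) := by
          rintro s1 s2 x1 x2 θ hθ0 hθ1 ⟨w1, hw1, hs1, hc1, rfl⟩ ⟨w2, hw2, hs2, hc2, rfl⟩
          have hf1 := feasfin w1 s1 hw1 hc1
          have hf2 := feasfin w2 s2 hw2 hc2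
          have hI1 : Iphir w1 ≤ s1 := by
            rw [IcoE w1 hw1 hf1, EReal.coe_le_coe_iff] at hc1; exact hc1
          have hI2 : Iphir w2 ≤ s2 := by
            rw [IcoE w2 hw2 hf2, EReal.coe_le_coe_iff] at hc2; exact hc2
          obtain ⟨hcf, hcI⟩ := hIconv w1 w2 hw1 hw2 hf1 hf2 θ hθ0 hθ1
          refine ⟨fun i => θ*w1 i + (1-θ)*w2 i,
            fun i => add_nonneg (mul_nonneg hθ0 (hw1 i)) (mul_nonneg (by linarith) (hw2 i)),
            ?_, ?_, ?_⟩
          · rw [Finset.sum_add_distrib, ← Finset.mul_sum, ← Finset.mul_sum, hs1, hs2]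
            ring
          · rw [IcoE _ (fun i => add_nonneg (mul_nonneg hθ0 (hw1 i))
              (mul_nonneg (by linarith) (hw2 i))) hcf]
            apply EReal.coe_le_coe_iff.2
            have : θ * Iphir w1 + (1-θ) * Iphir w2 ≤ θ*s1 + (1-θ)*s2 := by
              have g1 := mul_le_mul_of_nonneg_left hI1 hθ0
              have g2 := mul_le_mul_of_nonneg_left hI2 (by linarith : (0:ℝ) ≤ 1-θ)
              linarith
            linarith [hcI]
          · rw [Finset.sum_congr rfl
              (fun i (_ : i ∈ univ) => by ring :
                ∀ i ∈ univ, (θ*w1 i + (1-θ)*w2 i) * f i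
                  = θ*(w1 i * f i) + (1-θ)*(w2 i * f i)),
              Finset.sum_add_distrib, ← Finset.mul_sum, ← Finset.mul_sum]
        set Vv : ℝ → ℝ := fun s => sSup (P s) with hVdef
        set domV : Set ℝ := {s | (P s).Nonempty} with hdomV
        have hVcomb : ∀ x ∈ domV, ∀ z ∈ domV, ∀ θ : ℝ, 0 ≤ θ → θ ≤ 1 →
            (θ*x + (1-θ)*z ∈ domV ∧ θ * Vv x + (1-θ) * Vv z ≤ Vv (θ*x + (1-θ)*z)) := by
          intro x hx z hz θ hθ0 hθ1
          obtain ⟨x1, hx1⟩ := hx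
          obtain ⟨x2, hx2⟩ := hz
          constructor
          · exact ⟨θ*x1 + (1-θ)*x2, hPcomb x z x1 x2 θ hθ0 hθ1 hx1 hx2⟩
          · apply le_of_forall_pos_le_add
            intro ε hε
            obtain ⟨y1, hy1m, hy1⟩ := exists_lt_of_lt_csSup ⟨x1, hx1⟩
              (show Vv x - ε < Vv x by linarith)
            obtain ⟨y2, hy2m, hy2⟩ := exists_lt_of_lt_csSup ⟨x2, hx2⟩
              (show Vv z - ε < Vv z by linarith)
            have hmem := hPcomb x z y1 y2 θ hθ0 hθ1 hy1m hy2m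
            have hle := le_csSup (hPbdd _) hmem
            nlinarith [mul_le_mul_of_nonneg_left (show Vv x ≤ y1 + ε by linarith) hθ0,
              mul_le_mul_of_nonneg_left (show Vv z ≤ y2 + ε by linarith)
                (by linarith : (0:ℝ) ≤ 1-θ)]
        have hdomτ : τ ∈ domV := ⟨S0, hPw0 τ hτ.le⟩
        have hdom0 : (0:ℝ) ∈ domV := ⟨S0, hPw0 0 le_rfl⟩
        have hdomτ1 : τ + 1 ∈ domV := ⟨S0, hPw0 (τ+1) (by linarith)⟩
        obtain ⟨lam, hlamSG⟩ := supergrad Vv domV hVcomb τ 0 (τ+1) hdomτ hdom0 hdomτ1 hτ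
          (by linarith)
        set pstar : ℝ := Vv τ with hpstar
        have hVmono : Vv τ ≤ Vv (τ+1) := by
          apply csSup_le_csSup (hPbdd (τ+1)) ⟨S0, hPw0 τ hτ.le⟩
          rintro x ⟨w, hw, hw1, hc, rfl⟩
          exact ⟨w, hw, hw1, le_trans hc (EReal.coe_le_coe_iff.2 (by linarith)), rfl⟩
        have hlam0 : 0 ≤ lam := by
          have h2 := hlamSG (τ+1) hdomτ1
          have : Vv (τ+1) ≤ pstar + lam := by rw [hpstar]; simpa using h2
          linarith [hVmono]
        -- value bound for any finite-divergence simplex point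
        have hVs : ∀ w : Fin n → ℝ, (∀ i, 0 ≤ w i) → (∑ i, w i) = 1 →
            (∀ j, φ (w j / w0 j) ≠ ⊤) →
            (∑ i, w i * f i) ≤ pstar + lam * (Iphir w - τ) := by
          intro w hw hw1 hfin
          have hmem : (∑ i, w i * f i) ∈ P (Iphir w) :=
            ⟨w, hw, hw1, le_of_eq (IcoE w hw hfin), rfl⟩
          have h1 : (∑ i, w i * f i) ≤ Vv (Iphir w) := le_csSup (hPbdd _) hmem
          have h2 := hlamSG (Iphir w) ⟨_, hmem⟩
          linarith
        set Q : ℝ → Set ℝ := fun c => {x | ∃ w : Fin n → ℝ, (∀ i, 0 ≤ w i) ∧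
            (∀ j, φ (w j / w0 j) ≠ ⊤) ∧ (∑ i, w i) = c ∧
            x = (∑ i, w i * f i) - lam * Iphir w} with hQdef
        have hQbdd : ∀ c : ℝ, BddAbove (Q c) := by
          intro c
          refine ⟨c * max M 0 + lam * (δ - m*(c-1)), ?_⟩
          rintro x ⟨w, hw, hfin, hwc, rfl⟩
          have h1 : (∑ i, w i * f i) ≤ c * max M 0 := by
            calc ∑ i, w i * f i ≤ ∑ i, w i * max M 0 :=
                Finset.sum_le_sum fun i _ =>
                  mul_le_mul_of_nonneg_left (le_max_of_le_left (hjmax i)) (hw i)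
              _ = c * max M 0 := by rw [← Finset.sum_mul, hwc]
          have h2 := Ilb w hw hfin
          rw [hwc] at h2
          nlinarith [mul_le_mul_of_nonneg_left h2 hlam0]
        have hQmem : ∀ c : ℝ, p ≤ c → c ≤ q → ((c * S0 - lam * (φ c).toReal) ∈ Q c) := by
          intro c h1 h2
          have hc0 : 0 ≤ c := le_trans hp0 h1
          refine ⟨fun i => c * w0 i, fun i => mul_nonneg hc0 (hw0pos i).le, ?_, ?_, ?_⟩
          · intro j
            have e : (c * w0 j) / w0 j = c := by
              rw [mul_div_assoc, div_self (hw0pos j).ne', mul_one]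
            rw [e]; exact hseg c h1 h2
          · rw [← Finset.mul_sum, hw0sum, mul_one]
          · have e1 : Iphir (fun i => c * w0 i) = (φ c).toReal := by
              show ∑ i, w0 i * (φ ((c * w0 i) / w0 i)).toReal = (φ c).toReal
              have e : ∀ i : Fin n, w0 i * (φ ((c * w0 i) / w0 i)).toReal
                  = (φ c).toReal * w0 i := by
                intro i
                have e2 : (c * w0 i) / w0 i = c := by
                  rw [mul_div_assoc, div_self (hw0pos i).ne', mul_one]
                rw [e2]; ring
              rw [Finset.sum_congr rfl fun i _ => e i, ← Finset.mul_sum, hw0sum, mul_one]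
            rw [e1]
            have e3 : ∀ i : Fin n, (c * w0 i) * f i = c * (w0 i * f i) := fun i => by ring
            rw [Finset.sum_congr rfl fun i _ => e3 i, ← Finset.mul_sum]
        set Wv : ℝ → ℝ := fun c => sSup (Q c) with hWdef
        set domW : Set ℝ := {c | (Q c).Nonempty} with hdomW
        have hQcomb : ∀ (c1 c2 x1 x2 θ : ℝ), 0 ≤ θ → θ ≤ 1 → x1 ∈ Q c1 → x2 ∈ Q c2 →
            ∃ y ∈ Q (θ*c1 + (1-θ)*c2), θ*x1 + (1-θ)*x2 ≤ y := by
          rintro c1 c2 x1 x2 θ hθ0 hθ1 ⟨w1, hw1, hf1, hs1, rfl⟩ ⟨w2, hw2, hf2, hs2, rfl⟩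
          obtain ⟨hcf, hcI⟩ := hIconv w1 w2 hw1 hw2 hf1 hf2 θ hθ0 hθ1
          have hwnn : ∀ i : Fin n, 0 ≤ θ*w1 i + (1-θ)*w2 i := fun i =>
            add_nonneg (mul_nonneg hθ0 (hw1 i)) (mul_nonneg (by linarith) (hw2 i))
          have hsum : (∑ i, (θ*w1 i + (1-θ)*w2 i)) = θ*c1 + (1-θ)*c2 := by
            rw [Finset.sum_add_distrib, ← Finset.mul_sum, ← Finset.mul_sum, hs1, hs2]
          have e1 : ∑ i, (θ*w1 i + (1-θ)*w2 i) * f i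
              = θ*(∑ i, w1 i * f i) + (1-θ)*(∑ i, w2 i * f i) := by
            rw [Finset.sum_congr rfl
              (fun i (_ : i ∈ univ) => by ring :
                ∀ i ∈ univ, (θ*w1 i + (1-θ)*w2 i) * f i
                  = θ*(w1 i * f i) + (1-θ)*(w2 i * f i)),
              Finset.sum_add_distrib, ← Finset.mul_sum, ← Finset.mul_sum]
          refine ⟨(∑ i, (θ*w1 i + (1-θ)*w2 i) * f i)
              - lam * Iphir (fun i => θ*w1 i + (1-θ)*w2 i),
            ⟨fun i => θ*w1 i + (1-θ)*w2 i, hwnn, hcf, hsum, rfl⟩, ?_⟩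
          have h3 := mul_le_mul_of_nonneg_left hcI hlam0
          rw [e1]
          nlinarith [h3]
        have hWcomb : ∀ x ∈ domW, ∀ z ∈ domW, ∀ θ : ℝ, 0 ≤ θ → θ ≤ 1 →
            (θ*x + (1-θ)*z ∈ domW ∧ θ * Wv x + (1-θ) * Wv z ≤ Wv (θ*x + (1-θ)*z)) := by
          intro x hx z hz θ hθ0 hθ1
          obtain ⟨x1, hx1⟩ := hx
          obtain ⟨x2, hx2⟩ := hz
          obtain ⟨y, hym, -⟩ := hQcomb x z x1 x2 θ hθ0 hθ1 hx1 hx2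
          refine ⟨⟨y, hym⟩, ?_⟩
          apply le_of_forall_pos_le_add
          intro ε hε
          obtain ⟨y1, hy1m, hy1⟩ := exists_lt_of_lt_csSup ⟨x1, hx1⟩
            (show Wv x - ε < Wv x by linarith)
          obtain ⟨y2, hy2m, hy2⟩ := exists_lt_of_lt_csSup ⟨x2, hx2⟩
            (show Wv z - ε < Wv z by linarith)
          obtain ⟨y', hy'm, hy'⟩ := hQcomb x z y1 y2 θ hθ0 hθ1 hy1m hy2m
          have hle := le_csSup (hQbdd _) hy'm
          nlinarith [mul_le_mul_of_nonneg_left (show Wv x ≤ y1 + ε by linarith) hθ0,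
            mul_le_mul_of_nonneg_left (show Wv z ≤ y2 + ε by linarith)
              (by linarith : (0:ℝ) ≤ 1-θ)]
        have hdomW1 : (1:ℝ) ∈ domW := ⟨_, hQmem 1 hp1.le h1q.le⟩
        have hdomWp : p ∈ domW := ⟨_, hQmem p le_rfl (by linarith)⟩
        have hdomWq : q ∈ domW := ⟨_, hQmem q (by linarith) le_rfl⟩
        obtain ⟨η, hηSG⟩ := supergrad Wv domW hWcomb 1 p q hdomW1 hdomWp hdomWq hp1 h1q
        have hW1 : Wv 1 ≤ pstar - lam * τ := by
          apply csSup_le ⟨_, hQmem 1 hp1.le h1q.le⟩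
          rintro x ⟨w, hw, hfin, hw1, rfl⟩
          have h2 := hVs w hw hw1 hfin
          nlinarith [h2]
        have hss : ∀ w : Fin n → ℝ, (∀ i, 0 ≤ w i) → (∀ j, φ (w j / w0 j) ≠ ⊤) →
            (∑ i, w i * f i) - lam * Iphir w ≤ pstar - lam*τ + η*((∑ i, w i) - 1) := by
          intro w hw hfin
          have hmem : (∑ i, w i * f i) - lam * Iphir w ∈ Q (∑ i, w i) :=
            ⟨w, hw, hfin, rfl, rfl⟩
          have h1 := le_csSup (hQbdd _) hmem
          have h2 := hηSG (∑ i, w i) ⟨_, hmem⟩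
          linarith [hW1]
        have hps : ((pstar : ℝ) : EReal) ≤ sSup PS := by
          apply coe_le_of_forall_eps
          intro ε hε
          obtain ⟨x, hxm, hx⟩ := exists_lt_of_lt_csSup ⟨S0, hPw0 τ hτ.le⟩
            (show pstar - ε < Vv τ from by rw [← hpstar]; linarith)
          obtain ⟨w, hw, hw1, hc, rfl⟩ := hxm
          exact le_trans (EReal.coe_le_coe_iff.2 hx.le) (le_sSup ⟨w, hw, hw1, hc, rfl⟩)
        refine le_trans ?_ hps
        rcases hlam0.lt_or_eq with hlpos | hlzero
        · -- lam > 0 : the supergradient pair (lam, η) is an optimal dual pair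
          have h1 := hDualSum lam η (pstar - lam*τ - η) hlpos (by
            intro w hw hfin
            have h2 := hss w hw hfin
            linarith)
          have e : τ * lam + η + (pstar - lam*τ - η) = pstar := by ring
          rwa [e] at h1

        · -- lam = 0
          have hss0 : ∀ w : Fin n → ℝ, (∀ i, 0 ≤ w i) → (∀ j, φ (w j / w0 j) ≠ ⊤) →
              (∑ i, w i * f i) ≤ pstar + η*((∑ i, w i) - 1) := by
            intro w hw hfin
            have h2 := hss w hw hfin
            rw [← hlzero] at h2
            linarith
          by_cases hbd : ∃ T : ℝ, ∀ t : ℝ, 0 ≤ t → φ t ≠ ⊤ → t ≤ T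
          · obtain ⟨T, hT⟩ := hbd
            set T' : ℝ := max T 1 with hT'def
            have hT'1 : (1:ℝ) ≤ T' := le_max_right T 1
            set C : ℝ := δ + |m| *(T'+1) with hCdef
            have hC0 : 0 ≤ C := by positivity
            apply hEps pstar (τ + C) (by linarith)
            intro lam' hpos'
            have h1 := hDualSum lam' η (pstar - η + lam'*C) hpos' (by
              intro w hw hfin
              have hwsle : (∑ i, w i) ≤ T' := by
                calc ∑ i, w i = ∑ i, w0 i * (w i / w0 i) := by
                      refine Finset.sum_congr rfl fun i _ => ?_
                      rw [mul_comm, div_mul_cancel₀ _ (hw0pos i).ne']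
                  _ ≤ ∑ i, w0 i * T' := Finset.sum_le_sum fun i _ =>
                      mul_le_mul_of_nonneg_left
                        (le_trans (hT _ (htd w hw i) (hfin i)) (le_max_left T 1)) (hw0pos i).le
                  _ = T' := by rw [← Finset.sum_mul, hw0sum, one_mul]
              have hws0 : 0 ≤ ∑ i, w i := Finset.sum_nonneg fun i _ => hw i
              have hIlow : -C ≤ Iphir w := by
                have h3 := Ilb w hw hfin
                have h4 : |m * ((∑ i, w i) - 1)| ≤ |m| * (T' + 1) := by
                  rw [abs_mul]
                  apply mul_le_mul_of_nonneg_left _ (abs_nonneg m)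
                  rw [abs_le]
                  constructor <;> linarith
                have h5 := neg_abs_le (m * ((∑ i, w i) - 1))
                rw [hCdef]
                linarith
              have h6 := hss0 w hw hfin
              have h7 := mul_le_mul_of_nonneg_left hIlow hpos'.le
              linarith)
            have e : τ * lam' + η + (pstar - η + lam'*C) = pstar + lam'*(τ + C) := by ring
            rwa [e] at h1
          · push_neg at hbd
            have hfη : ∀ i : Fin n, f i ≤ η := by
              intro i
              by_contra hgt
              push_neg at hgt
              obtain ⟨t, ht0, htT, htB⟩ :=
                hbd (max 1 ((pstar - S0 + 1)/(w0 i * (f i - η)) + 1))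
              set w : Fin n → ℝ := Function.update w0 i (w0 i * t) with hwdef
              have hw : ∀ j, 0 ≤ w j := by
                intro j
                rcases eq_or_ne j i with rfl | hne
                · rw [hwdef, Function.update_self]; exact mul_nonneg (hw0pos j).le ht0
                · rw [hwdef, Function.update_of_ne hne]; exact (hw0pos j).le
              have hfin : ∀ j, φ (w j / w0 j) ≠ ⊤ := by
                intro j
                rcases eq_or_ne j i with rfl | hne
                · rw [hwdef, Function.update_self, mul_comm, mul_div_assoc,
                    div_self (hw0pos j).ne', mul_one]
                  exact htT
                · rw [hwdef, Function.update_of_ne hne, div_self (hw0pos j).ne']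
                  exact h1T
              have hsumw : (∑ j, w j) = 1 + w0 i * (t - 1) := by
                rw [hwdef, Finset.sum_update_of_mem (mem_univ i), ← Finset.erase_eq]
                have h8 := Finset.add_sum_erase univ w0 (mem_univ i)
                rw [hw0sum] at h8
                linear_combination h8
              have hsumwf : (∑ j, w j * f j) = S0 + w0 i * f i * (t - 1) := by
                have h9 : ∑ j, w j * f j = w i * f i + ∑ j ∈ univ.erase i, w j * f j :=
                  (Finset.add_sum_erase univ (fun j => w j * f j) (mem_univ i)).symm
                have h10 : ∑ j ∈ univ.erase i, w j * f j = ∑ j ∈ univ.erase i, w0 j * f j :=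
                  Finset.sum_congr rfl fun j hj => by
                    rw [hwdef, Function.update_of_ne (Finset.ne_of_mem_erase hj)]
                have h11 : w0 i * f i + ∑ j ∈ univ.erase i, w0 j * f j = S0 := by
                  rw [hS0]
                  exact Finset.add_sum_erase univ (fun j => w0 j * f j) (mem_univ i)
                have h12 : w i = w0 i * t := by rw [hwdef, Function.update_self]
                rw [h9, h10, h12]
                linear_combination h11
              have h6 := hss0 w hw hfin
              rw [hsumwf, hsumw] at h6
              have hden : 0 < w0 i * (f i - η) := mul_pos (hw0pos i) (by linarith)
              have htg1 : (1:ℝ) < t := lt_of_le_of_lt (le_max_left _ _) htB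
              have ht1 : (pstar - S0 + 1)/(w0 i * (f i - η)) + 1 < t :=
                lt_of_le_of_lt (le_max_right _ _) htB
              have h13 : w0 i * (f i - η) * (t - 1) ≤ pstar - S0 := by nlinarith [h6]
              have h15 : (pstar - S0 + 1)/(w0 i * (f i - η)) < t - 1 := by linarith
              have h14 : (pstar - S0 + 1) < w0 i * (f i - η) * (t - 1) := by
                calc pstar - S0 + 1
                    = ((pstar - S0 + 1)/(w0 i * (f i - η))) * (w0 i * (f i - η)) := by
                      exact (div_mul_cancel₀ _ hden.ne').symm
                  _ < (t-1) * (w0 i * (f i - η)) := mul_lt_mul_of_pos_right h15 hden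
                  _ = w0 i * (f i - η) * (t - 1) := by ring
              linarith
            have hMη : M ≤ η := hfη jmax
            set Dset : Set ℝ := {t : ℝ | 0 ≤ t ∧ φ t ≠ ⊤} with hDsetdef
            have hD1 : (1:ℝ) ∈ Dset := ⟨zero_le_one, h1T⟩
            have hDbb : BddBelow Dset := ⟨0, fun t ht => ht.1⟩
            set t0 : ℝ := sInf Dset with ht0def
            have ht00 : 0 ≤ t0 := le_csInf ⟨1, hD1⟩ fun t ht => ht.1
            have ht01 : t0 ≤ 1 := csInf_le hDbb hD1
            have hQt : η*(1-t0) + t0*S0 ≤ pstar := by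
              apply le_of_forall_pos_le_add
              intro ε hε
              set ε' : ℝ := ε / (|η| + |S0| + 1) with hε'def
              have hA0 : (0:ℝ) ≤ |η| + |S0| := by positivity
              have hε'pos : 0 < ε' := div_pos hε (by linarith)
              obtain ⟨t', ht'mem, ht'⟩ := exists_lt_of_csInf_lt ⟨1, hD1⟩
                (show sInf Dset < t0 + ε' by rw [← ht0def]; linarith)
              have ht'0 : 0 ≤ t' := ht'mem.1
              have ht'T : φ t' ≠ ⊤ := ht'mem.2
              have ht't0 : t0 ≤ t' := csInf_le hDbb ht'mem
              have hwnn : ∀ j : Fin n, 0 ≤ t' * w0 j := fun j => mul_nonneg ht'0 (hw0pos j).le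
              have hfin : ∀ j, φ ((t' * w0 j) / w0 j) ≠ ⊤ := by
                intro j
                rw [mul_div_assoc, div_self (hw0pos j).ne', mul_one]
                exact ht'T
              have h6 := hss0 (fun j => t' * w0 j) hwnn hfin
              have e1 : ∑ j, (t' * w0 j) * f j = t' * S0 := by
                rw [Finset.sum_congr rfl
                  (fun j (_ : j ∈ univ) => by ring :
                    ∀ j ∈ univ, (t' * w0 j) * f j = t' * (w0 j * f j)),
                  ← Finset.mul_sum, ← hS0]
              have e2 : ∑ j, t' * w0 j = t' := by rw [← Finset.mul_sum, hw0sum, mul_one]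
              rw [e1, e2] at h6
              have h7 : t' - t0 < ε' := by linarith
              have h9 : (t'-t0)*(η - S0) ≤ ε' * (|η| + |S0|) := by
                have hab : |η - S0| ≤ |η| + |S0| := by
                  have := abs_add_le η (-S0)
                  simpa [sub_eq_add_neg, abs_neg] using this
                calc (t'-t0)*(η - S0) ≤ (t'-t0)*|η - S0| :=
                    mul_le_mul_of_nonneg_left (le_abs_self _) (by linarith)
                  _ ≤ ε' * (|η| + |S0|) :=
                    mul_le_mul h7.le hab (abs_nonneg _) hε'pos.le
              have h10 : ε' * (|η| + |S0|) ≤ ε := by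
                rw [hε'def, div_mul_eq_mul_div, div_le_iff₀ (by linarith)]
                nlinarith
              nlinarith [h6, h9, h10]
            apply hEps pstar (τ + δ) (by linarith)
            intro lam' hpos'
            have hK : ∀ i, ∀ t : ℝ, 0 ≤ t → φ t ≠ ⊤ →
                (f i - (M - lam'*m))/lam' * t - (φ t).toReal
                  ≤ ((f i - M)*t0 + lam'*(m+δ))/lam' := by
              intro i t ht hT
              have hmn : m*(t-1) - δ ≤ (φ t).toReal := by
                have h2 := hmin t ht
                rw [hphiR t ht hT, EReal.coe_le_coe_iff] at h2
                exact h2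
              have htt0 : t0 ≤ t := csInf_le hDbb ⟨ht, hT⟩
              have e : (f i - (M - lam'*m))/lam' * t - (φ t).toReal
                  = ((f i - (M - lam'*m)) * t - lam' * (φ t).toReal)/lam' := by
                field_simp
              rw [e, div_le_div_iff_of_pos_right hpos']
              have h16 : (f i - M) * t ≤ (f i - M) * t0 :=
                mul_le_mul_of_nonpos_left htt0 (by linarith [hjmax i])
              nlinarith [mul_le_mul_of_nonneg_left hmn hpos'.le]
            have h1 := hDual1 lam' (M - lam'*m) hpos' _ hK
            have e : τ*lam' + (M - lam'*m)
                + ∑ i, w0 i * (lam' * (((f i - M)*t0 + lam'*(m+δ))/lam'))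
                = (1-t0)*M + t0*S0 + lam'*(τ+δ) := by
              have per : ∀ i : Fin n, w0 i * (lam' * (((f i - M)*t0 + lam'*(m+δ))/lam'))
                  = (w0 i * f i)*t0 - M*t0*w0 i + lam'*(m+δ)*w0 i := by
                intro i
                have h5 : lam' ≠ 0 := hpos'.ne'
                field_simp
              rw [Finset.sum_congr rfl fun i _ => per i]
              rw [Finset.sum_add_distrib, Finset.sum_sub_distrib, ← Finset.sum_mul,
                ← Finset.mul_sum, ← Finset.mul_sum, hw0sum, ← hS0]
              ring
            rw [e] at h1
            refine le_trans h1 (EReal.coe_le_coe_iff.2 ?_)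
            have h17 : (1-t0)*M ≤ (1-t0)*η := mul_le_mul_of_nonneg_left hMη (by linarith)
            linarith [hQt]



      · -- D ⊆ [0,1] : forced primal = {w0}
        push_neg at hRight
        refine le_trans ?_ (le_sSup hw0mem)
        obtain ⟨jmin, hjmin⟩ := Finite.exists_min f
        apply hOneSided (f jmin)
        intro i lam hpos t ht hT
        have ht1 : t ≤ 1 := hRight t ht hT
        have hmn : m*(t-1) - δ ≤ (φ t).toReal := by
          have h2 := hmin t ht
          rw [hphiR t ht hT, EReal.coe_le_coe_iff] at h2
          exact h2
        nlinarith [mul_le_mul_of_nonneg_left hmn hpos.le,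
          mul_nonneg (sub_nonneg.2 ht1) (sub_nonneg.2 (hjmin i))]
    · -- D ⊆ [1,∞) : forced primal = {w0}
      push_neg at hLeft
      refine le_trans ?_ (le_sSup hw0mem)
      apply hOneSided M
      intro i lam hpos t ht hT
      have ht1 : 1 ≤ t := hLeft t ht hT
      have hmn : m*(t-1) - δ ≤ (φ t).toReal := by
        have h2 := hmin t ht
        rw [hphiR t ht hT, EReal.coe_le_coe_iff] at h2
        exact h2
      nlinarith [mul_le_mul_of_nonneg_left hmn hpos.le,
        mul_nonneg (sub_nonneg.2 ht1) (sub_nonneg.2 (hjmax i))]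
  exact le_antisymm (sSup_le fun x hx => le_sInf fun v hv => hweak x hx v hv) hstrong
end
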